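/- arXiv:2311.15699 — 5 statements merged into one kernel-verified Lean document; each statement's English description precedes it below -/
import Mathlib

section
/- Let y = (y_1, y_2, ..., y_n) be a vector of n positive integer car lengths. If y is minimally invariant (i.e., PAinv_n(y) = {(1,1,...,1)}), then y_1 < min(y_2, y_3, ..., y_n) and y_2 ≠ Σ_{j ∈ [n], j ≠ 2} y_j. -/
/-- Car with preference `pref` and length `len` fits at spot `s`:
`pref ≤ s`, the spots `s, s+1, ..., s+len-1` all lie in the lot `[1, m]`,
and none of them is occupied. -/
def FitsAt (occ : Finset ℕ) (m pref len s : ℕ) : Prop :=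
  pref ≤ s ∧ s + len ≤ m + 1 ∧ ∀ t ∈ Finset.Ico s (s + len), t ∉ occ

/-- The car parks at `s`: `s` is the least spot (≥ its preference) where it fits. -/
def ParksAt (occ : Finset ℕ) (m pref len s : ℕ) : Prop :=
  FitsAt occ m pref len s ∧ ∀ s' < s, ¬ FitsAt occ m pref len s'

/-- Every car in the list of (preference, length) pairs can park, with
cars entering in order, starting from the set `occ` of occupied spots. -/
inductive Park (m : ℕ) : Finset ℕ → List (ℕ × ℕ) → Prop
  | nil (occ : Finset ℕ) : Park m occ []
  | cons (occ : Finset ℕ) (pref len : ℕ) (rest : List (ℕ × ℕ)) (s : ℕ) :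
      ParksAt occ m pref len s →
      Park m (occ ∪ Finset.Ico s (s + len)) rest →
      Park m occ ((pref, len) :: rest)

/-- `x` is a parking assortment for the length vector `y`. -/
def PA (y x : List ℕ) : Prop :=
  x.length = y.length ∧ (∀ v ∈ x, 1 ≤ v ∧ v ≤ y.sum) ∧ Park y.sum ∅ (x.zip y)

/-- `x` is a (permutation) invariant parking assortment for `y`. -/
def PAinv (y x : List ℕ) : Prop :=
  ∀ x' : List ℕ, x.Perm x' → PA y x'

/-- The degree of `x`: the number of entries of `x` different from 1. -/
def deg (x : List ℕ) : ℕ := (x.filter (fun v => v ≠ 1)).length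

/-- The characteristic of `y`: the greatest degree over all invariant
parking assortments for `y`. -/
noncomputable def chi (y : List ℕ) : ℕ := sSup {d | ∃ x, PAinv y x ∧ deg x = d}

/-- The invariant solution set of `y`. -/
def Wset (y : List ℕ) : Set ℕ :=
  {w | PAinv y (List.replicate (y.length - 1) 1 ++ [w])}
/-!
If `μ := min(y₂, …, yₙ) ≤ y₁`, then `(μ + 1, 1, …, 1)` is invariant: when the car preferring
`μ + 1` is car 1, it leaves the gap `[1, μ]`, which the first car of length `μ` fills exactly;
otherwise car 1 parks before it and it is blocked, so it parks right after the cars before it.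
If `y₂ = Σ_{j ≠ 2} y_j`, the same dichotomy shows that `(y₂ + 1, 1, …, 1)` is invariant, the one
new case being cars 1 and 2 parking at `[1, y₁]` and `[y₂ + 1, 2 y₂]`, whose gap the remaining
cars fill exactly. Either vector contradicts minimal invariance.
-/

open Finset

lemma parksAt_self {occ : Finset ℕ} {m p ℓ : ℕ} (h : FitsAt occ m p ℓ p) :
    ParksAt occ m p ℓ p :=
  ⟨h, fun _ hs hfit => absurd hfit.1 (not_le.2 hs)⟩

lemma parksAt_of_prefix {R : Finset ℕ} {m p ℓ c : ℕ} (hp : 1 ≤ p) (hpc : p ≤ c) (hℓ : 1 ≤ ℓ)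
    (hm : c + ℓ ≤ m + 1) (hR : ∀ t ∈ R, c + ℓ ≤ t) : ParksAt (Ico 1 c ∪ R) m p ℓ c := by
  refine ⟨⟨hpc, hm, fun t ht hocc => ?_⟩, fun s hs ⟨hps, _, hfree⟩ => ?_⟩
  · rw [mem_Ico] at ht
    rcases mem_union.1 hocc with h | h
    · rw [mem_Ico] at h
      omega
    · have := hR t h
      omega
  · exact hfree s (by rw [mem_Ico]; omega) (mem_union_left _ (by rw [mem_Ico]; omega))

lemma parksAt_of_lt_Ico {m p ℓ b c : ℕ} (hpb : p ≤ b) (hbc : b < c) (hb : b < p + ℓ)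
    (hm : c + ℓ ≤ m + 1) : ParksAt (Ico b c) m p ℓ c := by
  refine ⟨⟨by omega, hm, fun t ht hocc => ?_⟩, fun s hs ⟨hps, _, hfree⟩ => ?_⟩
  · rw [mem_Ico] at ht hocc
    omega
  · by_cases hsb : s < b
    · exact hfree b (by rw [mem_Ico]; omega) (by rw [mem_Ico]; omega)
    · exact hfree s (by rw [mem_Ico]; omega) (by rw [mem_Ico]; omega)

lemma park_ones_append {R : Finset ℕ} {m : ℕ} (P : List ℕ) (rest : List (ℕ × ℕ)) {c : ℕ}
    (hc : 1 ≤ c) (hP : ∀ ℓ ∈ P, 1 ≤ ℓ) (hm : c + P.sum ≤ m + 1) (hR : ∀ t ∈ R, c + P.sum ≤ t)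
    (hrest : Park m (Ico 1 (c + P.sum) ∪ R) rest) :
    Park m (Ico 1 c ∪ R) (P.map (1, ·) ++ rest) := by
  induction P generalizing c with
  | nil => simpa using hrest
  | cons ℓ P ih =>
    simp only [List.sum_cons, List.mem_cons, forall_eq_or_imp] at hm hR hP
    refine .cons _ _ _ _ c (parksAt_of_prefix le_rfl hc hP.1 (by omega)
      fun t ht => by have := hR t ht; omega) ?_
    rw [union_right_comm, Ico_union_Ico_eq_Ico hc (by omega)]
    exact ih (by omega) hP.2 (by omega) (fun t ht => by have := hR t ht; omega)
      (by rwa [add_assoc])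

lemma park_ones_fill {m c : ℕ} (P : List ℕ) (hc : 1 ≤ c) (hP : ∀ ℓ ∈ P, 1 ≤ ℓ)
    (hm : c + P.sum = m + 1) : Park m (Ico 1 c) (P.map (1, ·)) := by
  simpa using park_ones_append (R := ∅) P [] hc hP hm.le (by simp) (.nil _)

/-- Cars longer than the gap `[1, μ]` park at the end until the first car of length `μ`
closes the gap; the remaining cars then fill up the lot. -/
lemma park_ones_gap_min {m μ c : ℕ} (L : List ℕ) (hμ : 1 ≤ μ) (hμL : μ ∈ L)
    (hL : ∀ ℓ ∈ L, μ ≤ ℓ) (hc : μ + 1 < c) (hsum : c + L.sum = m + 1 + μ) :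
    Park m (Ico (μ + 1) c) (L.map (1, ·)) := by
  induction L generalizing c with
  | nil => simp at hμL
  | cons ℓ L ih =>
    simp only [List.sum_cons, List.mem_cons, forall_eq_or_imp] at hsum hL hμL
    rcases eq_or_lt_of_le hL.1 with rfl | hℓ
    · have hpark := parksAt_of_prefix (R := Ico (μ + 1) c) (m := m) le_rfl le_rfl hμ (by omega)
        fun t ht => by rw [mem_Ico] at ht; omega
      rw [Ico_self, empty_union] at hpark
      refine .cons _ _ _ _ 1 hpark ?_
      rw [union_comm, add_comm 1, Ico_union_Ico_eq_Ico (by omega) hc.le]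
      exact park_ones_fill L (by omega) (fun t ht => hμ.trans (hL.2 t ht)) (by omega)
    · have hμL' : μ ∈ L := hμL.resolve_left hℓ.ne
      have := List.le_sum_of_mem hμL'
      refine .cons _ _ _ _ c (parksAt_of_lt_Ico (by omega) hc (by omega) (by omega)) ?_
      rw [Ico_union_Ico_eq_Ico hc.le (by omega)]
      exact ih hμL' hL.2 (by omega) (by omega)

lemma park_blocked {P Q : List ℕ} {w yc : ℕ} (hpos : ∀ v ∈ P ++ yc :: Q, 0 < v) (hw : 1 ≤ w)
    (hwP : w ≤ P.sum + 1) :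
    Park (P ++ yc :: Q).sum ∅ (P.map (1, ·) ++ (w, yc) :: Q.map (1, ·)) := by
  simp only [List.mem_append, List.mem_cons] at hpos
  have hyc : 1 ≤ yc := hpos yc (by simp)
  have hsum : (P ++ yc :: Q).sum = P.sum + yc + Q.sum := by simp; omega
  have hprefix := park_ones_append (R := ∅) (m := (P ++ yc :: Q).sum) P ((w, yc) :: Q.map (1, ·))
    le_rfl (fun ℓ hℓ => hpos ℓ (by simp [hℓ])) (by omega) (by simp)
  rw [Ico_self] at hprefix
  refine hprefix (.cons _ _ _ _ _ (parksAt_of_prefix hw (by omega) hyc (by omega) (by simp)) ?_)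
  rw [union_empty, Ico_union_Ico_eq_Ico (by omega) (by omega)]
  exact park_ones_fill Q (by omega) (fun ℓ hℓ => hpos ℓ (by simp [hℓ])) (by omega)

lemma List.perm_cons_replicate {α : Type*} {w a : α} {k : ℕ} {l : List α}
    (h : l.Perm (w :: List.replicate k a)) :
    ∃ i j, i + j = k ∧ l = List.replicate i a ++ w :: List.replicate j a := by
  obtain ⟨A, B, rfl⟩ := List.append_of_mem (h.mem_iff.2 List.mem_cons_self)
  obtain ⟨hlen, hA, hB⟩ := List.append_eq_replicate_iff.1
    (List.perm_replicate.1 (List.perm_middle.symm.trans h).cons_inv)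
  exact ⟨A.length, B.length, hlen, by rw [← hA, ← hB]⟩

lemma List.zip_replicate_length {α β : Type*} (a : α) (L : List β) :
    (List.replicate L.length a).zip L = L.map (a, ·) := by
  induction L with
  | nil => rfl
  | cons b L ih => simp [List.replicate_succ, ih]

/-- A permutation of `(w, 1, …, 1)` is determined by the car `yc` that receives `w`. -/
lemma pAinv_of_park {y : List ℕ} {w k : ℕ} (hk : k + 1 = y.length) (hw : 1 ≤ w)
    (hwy : w ≤ y.sum)
    (hpark : ∀ P yc Q, y = P ++ yc :: Q →
      Park y.sum ∅ (P.map (1, ·) ++ (w, yc) :: Q.map (1, ·))) :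
    PAinv y (w :: List.replicate k 1) := by
  intro x hx
  obtain ⟨i, j, hij, rfl⟩ := List.perm_cons_replicate hx.symm
  have hi : i < y.length := by omega
  obtain ⟨P, yc, Q, rfl, hP⟩ : ∃ P yc Q, y = P ++ yc :: Q ∧ P.length = i :=
    ⟨y.take i, y[i], y.drop (i + 1), by rw [List.getElem_cons_drop, List.take_append_drop],
      by simp; omega⟩
  have hQ : Q.length = j := by simp at hk; omega
  refine ⟨by simp; omega, fun v hv => ?_, ?_⟩
  · simp only [List.mem_append, List.mem_cons, List.mem_replicate] at hv
    omega
  · subst hP hQ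
    rw [List.zip_append (by simp), List.zip_cons_cons, List.zip_replicate_length,
      List.zip_replicate_length]
    exact hpark P yc Q rfl

lemma pAinv_succ_min {y₁ μ : ℕ} {t : List ℕ} (hpos : ∀ v ∈ y₁ :: t, 0 < v) (hμt : μ ∈ t)
    (hμ : ∀ ℓ ∈ t, μ ≤ ℓ) (hμy : μ ≤ y₁) :
    PAinv (y₁ :: t) ((μ + 1) :: List.replicate t.length 1) := by
  have hy₁ : 1 ≤ y₁ := hpos y₁ (by simp)
  have hμ₁ : 1 ≤ μ := hpos μ (by simp [hμt])
  have hμsum := List.le_sum_of_mem hμt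
  refine pAinv_of_park rfl (by omega) (by simp; omega) fun P yc Q hy => ?_
  rcases P with _ | ⟨p, P⟩
  · obtain ⟨rfl, rfl⟩ : y₁ = yc ∧ t = Q := by simpa using hy
    refine .cons _ _ _ _ (μ + 1) (parksAt_self ⟨le_rfl, by simp; omega, by simp⟩) ?_
    rw [empty_union]
    exact park_ones_gap_min t hμ₁ hμt hμ (by omega) (by simp; omega)
  · obtain ⟨rfl, rfl⟩ : y₁ = p ∧ t = P ++ yc :: Q := by simpa using hy
    exact park_blocked (P := y₁ :: P) hpos (by omega) (by simp; omega)

lemma pAinv_of_eq_add_sum {y₁ y₂ : ℕ} {ys : List ℕ} (hpos : ∀ v ∈ y₁ :: y₂ :: ys, 0 < v)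
    (heq : y₂ = y₁ + ys.sum) :
    PAinv (y₁ :: y₂ :: ys) ((y₂ + 1) :: List.replicate (ys.length + 1) 1) := by
  have hy₁ : 1 ≤ y₁ := hpos y₁ (by simp)
  have hys : ∀ ℓ ∈ ys, 1 ≤ ℓ := fun ℓ hℓ => hpos ℓ (by simp [hℓ])
  have hsum : (y₁ :: y₂ :: ys).sum = y₂ + y₂ := by simp; omega
  refine pAinv_of_park rfl (by omega) (by omega) fun P yc Q hy => ?_
  rw [hsum]
  rcases P with _ | ⟨p, _ | ⟨p', P⟩⟩
  · obtain ⟨rfl, rfl⟩ : y₁ = yc ∧ y₂ :: ys = Q := by simpa using hy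
    refine .cons _ _ _ _ (y₂ + 1) (parksAt_self ⟨le_rfl, by omega, by simp⟩) ?_
    have hpark := parksAt_of_prefix (R := Ico (y₂ + 1) (y₂ + 1 + y₁)) (m := y₂ + y₂) (ℓ := y₂)
      le_rfl le_rfl (by omega) (by omega) fun t ht => by rw [mem_Ico] at ht; omega
    rw [Ico_self] at hpark
    rw [empty_union]
    refine .cons _ _ _ _ 1 hpark ?_
    rw [union_comm, add_comm 1, Ico_union_Ico_eq_Ico (by omega) (by omega)]
    exact park_ones_fill ys (by omega) hys (by omega)
  · obtain ⟨rfl, rfl, rfl⟩ : y₁ = p ∧ y₂ = yc ∧ ys = Q := by simpa using hy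
    by_cases hblk : y₂ ≤ y₁
    · rw [← hsum]
      exact park_blocked (P := [y₁]) hpos (by omega) (by simp; omega)
    · refine .cons _ _ _ _ 1 (parksAt_self ⟨le_rfl, by omega, by simp⟩) ?_
      refine .cons _ _ _ _ (y₂ + 1) (parksAt_self ⟨le_rfl, by omega, ?_⟩) ?_
      · intro t ht hocc
        simp only [mem_Ico, empty_union] at ht hocc
        omega
      · rw [empty_union]
        simpa using park_ones_append ys [] (by omega) hys (by omega)
          (fun t ht => by rw [mem_Ico] at ht; omega) (.nil _)
  · obtain ⟨rfl, rfl, rfl⟩ : y₁ = p ∧ y₂ = p' ∧ ys = P ++ yc :: Q := by simpa using hy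
    rw [← hsum]
    exact park_blocked (P := y₁ :: y₂ :: P) hpos (by omega) (by simp; omega)

/-- If `y` is minimally invariant then `y₁ < min(y₂,…,yₙ)` and
`y₂ ≠ Σ_{j ≠ 2} y_j`. -/
theorem stmt0 (n : ℕ) (hn : 2 ≤ n) (y : List ℕ) (hylen : y.length = n)
    (hypos : ∀ v ∈ y, 0 < v)
    (hminimal : {x : List ℕ | PAinv y x} = {List.replicate n 1}) :
    (∀ j, 1 ≤ j → j < n → y.getD 0 0 < y.getD j 0) ∧
      y.getD 1 0 ≠ (y.eraseIdx 1).sum := by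
  obtain ⟨y₁, y₂, ys, rfl⟩ : ∃ a b l, y = a :: b :: l := by
    match y, hylen with
    | a :: b :: l, _ => exact ⟨a, b, l, rfl⟩
    | [], h | [_], h => simp at h; omega
  subst hylen
  have hone : ∀ w, PAinv (y₁ :: y₂ :: ys) (w :: List.replicate (ys.length + 1) 1) → w = 1 :=
    fun w hw => (List.cons.inj (hminimal.subset hw)).1
  refine ⟨fun j hj hjn => ?_, fun heq => ?_⟩
  · obtain ⟨μ, hμt, hμ⟩ := (y₂ :: ys).toFinset.exists_min_image id ⟨y₂, by simp⟩
    simp only [List.mem_toFinset, id] at hμt hμ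
    obtain ⟨j, rfl⟩ : ∃ j', j = j' + 1 := ⟨j - 1, by omega⟩
    have hj : (y₂ :: ys).getD j 0 ∈ y₂ :: ys := by
      rw [List.getD_eq_getElem _ _ (by simp at hjn ⊢; omega)]
      exact List.getElem_mem _
    by_contra hle
    have := hone _ (pAinv_succ_min hypos hμt hμ ((hμ _ hj).trans (by simpa using hle)))
    have := hypos μ (by simp [hμt])
    omega
  · have := hone _ (pAinv_of_eq_add_sum hypos (by simpa using heq))
    have := hypos y₂ (by simp)
    omega
end

section
/- Let y = (y_1, y_2, ..., y_n) be a vector of n positive integer car lengths with n ≥ 2. The characteristic χ(y) equals n−1 if and only if y_1 ≥ y_2 and y_2 = y_3 = ... = y_n. -/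
open Finset

/-- `Park`, recording the spots `fin` occupied once all the cars have parked. -/
inductive ParkTo (m : ℕ) : Finset ℕ → List (ℕ × ℕ) → Finset ℕ → Prop
  | nil (occ : Finset ℕ) : ParkTo m occ [] occ
  | cons (occ : Finset ℕ) (pref len : ℕ) (rest : List (ℕ × ℕ)) (s : ℕ) (fin : Finset ℕ) :
      ParksAt occ m pref len s →
      ParkTo m (occ ∪ Ico s (s + len)) rest fin →
      ParkTo m occ ((pref, len) :: rest) fin

section Parking

variable {m : ℕ}

theorem ParksAt.unique {occ : Finset ℕ} {pref len s s' : ℕ} (h : ParksAt occ m pref len s)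
    (h' : ParksAt occ m pref len s') : s = s' := by
  by_contra hne
  rcases Nat.lt_or_gt_of_ne hne with hlt | hlt
  · exact h'.2 s hlt h.1
  · exact h.2 s' hlt h'.1

theorem parksAt_of_fitsAt_pref {occ : Finset ℕ} {pref len : ℕ}
    (h : FitsAt occ m pref len pref) : ParksAt occ m pref len pref :=
  ⟨h, fun _ hs hfit => absurd hfit.1 (Nat.not_le.2 hs)⟩

theorem ParksAt.eq_pref_of_empty {pref len s : ℕ} (h : ParksAt ∅ m pref len s) : s = pref :=
  h.unique (parksAt_of_fitsAt_pref ⟨le_rfl, by linarith [h.1.1, h.1.2.1], by simp⟩)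

theorem parksAt_succ_of_Ico {a c pref len : ℕ} (ha : a ≤ pref) (hc : pref ≤ c + 1)
    (hlen : 1 ≤ len) (hm : c + len ≤ m) : ParksAt (Ico a (c + 1)) m pref len (c + 1) := by
  refine ⟨⟨hc, by omega, fun t ht => by simp only [mem_Ico] at ht ⊢; omega⟩, ?_⟩
  intro s hs hfit
  have := hfit.1
  exact hfit.2.2 s (by simp only [mem_Ico]; omega) (by simp only [mem_Ico]; omega)

theorem park_iff_exists_parkTo {occ : Finset ℕ} {l : List (ℕ × ℕ)} :
    Park m occ l ↔ ∃ fin, ParkTo m occ l fin := by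
  constructor
  · intro h
    induction h with
    | nil occ => exact ⟨occ, .nil occ⟩
    | cons occ pref len rest s hs _ ih =>
      obtain ⟨fin, hfin⟩ := ih
      exact ⟨fin, .cons occ pref len rest s fin hs hfin⟩
  · rintro ⟨fin, h⟩
    induction h with
    | nil occ => exact .nil occ
    | cons occ pref len rest s fin hs _ ih => exact .cons occ pref len rest s hs ih

namespace ParkTo

theorem append {occ mid fin : Finset ℕ} {l₁ l₂ : List (ℕ × ℕ)} (h₁ : ParkTo m occ l₁ mid)
    (h₂ : ParkTo m mid l₂ fin) : ParkTo m occ (l₁ ++ l₂) fin := by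
  induction h₁ with
  | nil => exact h₂
  | cons occ pref len rest s _ hs _ ih => exact .cons occ pref len (rest ++ l₂) s fin hs (ih h₂)

theorem of_append {occ fin : Finset ℕ} {l₁ l₂ : List (ℕ × ℕ)}
    (h : ParkTo m occ (l₁ ++ l₂) fin) : ∃ mid, ParkTo m occ l₁ mid ∧ ParkTo m mid l₂ fin := by
  induction l₁ generalizing occ with
  | nil => exact ⟨occ, .nil occ, h⟩
  | cons pr rest ih =>
    cases h with
    | cons _ pref len _ s _ hs hrest =>
      obtain ⟨mid, h₁, h₂⟩ := ih hrest
      exact ⟨mid, .cons occ pref len rest s mid hs h₁, h₂⟩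

theorem nil_eq {occ fin : Finset ℕ} (h : ParkTo m occ [] fin) : fin = occ := by
  cases h; rfl

theorem subset {occ fin : Finset ℕ} {l : List (ℕ × ℕ)} (h : ParkTo m occ l fin) :
    occ ⊆ fin := by
  induction h with
  | nil => exact subset_rfl
  | cons _ _ _ _ _ _ _ _ ih => exact subset_union_left.trans ih

theorem exists_pref_le {occ fin : Finset ℕ} {l : List (ℕ × ℕ)} (h : ParkTo m occ l fin)
    {u : ℕ} (hu : u ∈ fin) (huocc : u ∉ occ) : ∃ pr ∈ l, pr.1 ≤ u := by
  induction h with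
  | nil => exact absurd hu huocc
  | cons occ pref len rest s _ hs _ ih =>
    by_cases hnew : u ∈ Ico s (s + len)
    · exact ⟨(pref, len), List.mem_cons_self, hs.1.1.trans (mem_Ico.1 hnew).1⟩
    · obtain ⟨pr, hpr, hle⟩ := ih hu (by simp [huocc, hnew])
      exact ⟨pr, List.mem_cons_of_mem _ hpr, hle⟩

theorem card_eq {occ fin : Finset ℕ} {l : List (ℕ × ℕ)} (h : ParkTo m occ l fin) :
    fin.card = occ.card + (l.map Prod.snd).sum := by
  induction h with
  | nil => simp
  | cons occ pref len rest s fin hs _ ih =>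
    have hdisj : Disjoint occ (Ico s (s + len)) :=
      disjoint_right.2 fun t ht => hs.1.2.2 t ht
    rw [ih, card_union_of_disjoint hdisj, Nat.card_Ico]
    simp only [List.map_cons, List.sum_cons]
    omega

theorem subset_Ico {occ fin : Finset ℕ} {l : List (ℕ × ℕ)} (h : ParkTo m occ l fin)
    (hl : ∀ pr ∈ l, 1 ≤ pr.1) (hocc : occ ⊆ Ico 1 (m + 1)) : fin ⊆ Ico 1 (m + 1) := by
  induction h with
  | nil => exact hocc
  | cons occ pref len rest s fin hs _ ih =>
    have hpref := hl _ List.mem_cons_self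
    refine ih (fun pr hpr => hl pr (List.mem_cons_of_mem _ hpr)) (union_subset hocc ?_)
    intro t ht
    have := hs.1.1
    have := hs.1.2.1
    simp only [mem_Ico] at ht ⊢
    omega

theorem eq_Ico_of_sum_eq {fin : Finset ℕ} {l : List (ℕ × ℕ)} (h : ParkTo m ∅ l fin)
    (hl : ∀ pr ∈ l, 1 ≤ pr.1) (hsum : (l.map Prod.snd).sum = m) : fin = Ico 1 (m + 1) :=
  eq_of_subset_of_card_le (h.subset_Ico hl (empty_subset _)) (by simp [h.card_eq, hsum])

/-- Only the car preferring `1` can take the spots `1, …, c`. -/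
theorem low_car_parks_at_one {occ fin : Finset ℕ} {front back : List (ℕ × ℕ)}
    {c len : ℕ} (h : ParkTo m occ (front ++ (1, len) :: back) fin)
    (hfront : ∀ pr ∈ front, c < pr.1) (hback : ∀ pr ∈ back, c < pr.1)
    (hocc : Disjoint occ (Ico 1 (c + 1))) (hfin : Ico 1 (c + 1) ⊆ fin) (hc : 1 ≤ c) :
    c ≤ len ∧ ∃ mid, ParkTo m occ front mid ∧ Disjoint mid (Ico 1 (1 + len)) ∧
      ParkTo m (mid ∪ Ico 1 (1 + len)) back fin := by
  obtain ⟨mid, hfr, hrest⟩ := h.of_append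
  cases hrest with
  | cons _ _ _ _ s _ hs hbk =>
    have hmid : Disjoint mid (Ico 1 (c + 1)) := by
      refine disjoint_right.2 fun t ht htmid => ?_
      have htocc : t ∉ occ := disjoint_right.1 hocc ht
      obtain ⟨pr, hpr, hle⟩ := hfr.exists_pref_le htmid htocc
      have := hfront pr hpr
      simp only [mem_Ico] at ht
      omega
    have hcover : ∀ t ∈ Ico 1 (c + 1), t ∈ Ico s (s + len) := by
      intro t ht
      by_contra hnew
      obtain ⟨pr, hpr, hle⟩ :=
        hbk.exists_pref_le (hfin ht) (by simp [hnew, disjoint_right.1 hmid ht])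
      have := hback pr hpr
      simp only [mem_Ico] at ht
      omega
    have h1 := hcover 1 (by simp only [mem_Ico]; omega)
    have hc' := hcover c (by simp only [mem_Ico]; omega)
    have hpref := hs.1.1
    simp only [mem_Ico] at h1 hc'
    obtain rfl : s = 1 := by omega
    exact ⟨by omega, mid, hfr, disjoint_left.2 fun t htm ht => hs.1.2.2 t ht htm, hbk⟩

end ParkTo

theorem parkTo_Ico_of_prefs_le {a c : ℕ} {l : List (ℕ × ℕ)}
    (hl : ∀ pr ∈ l, a ≤ pr.1 ∧ pr.1 ≤ c + 1 ∧ 1 ≤ pr.2) (hac : a ≤ c + 1)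
    (hm : c + (l.map Prod.snd).sum ≤ m) :
    ParkTo m (Ico a (c + 1)) l (Ico a (c + (l.map Prod.snd).sum + 1)) := by
  induction l generalizing c with
  | nil => exact .nil _
  | cons pr rest ih =>
    obtain ⟨pref, len⟩ := pr
    obtain ⟨ha, hc, hlen⟩ := hl _ List.mem_cons_self
    simp only [List.map_cons, List.sum_cons] at hm ⊢
    refine .cons _ pref len rest (c + 1) _ (parksAt_succ_of_Ico ha hc hlen (by omega)) ?_
    rw [Ico_union_Ico_eq_Ico hac (by omega), show c + 1 + len = c + len + 1 by omega,
      show c + (len + (rest.map Prod.snd).sum) = c + len + (rest.map Prod.snd).sum by omega]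
    refine ih (fun pr hpr => ?_) (by omega) (by omega)
    obtain ⟨h1, h2, h3⟩ := hl pr (List.mem_cons_of_mem _ hpr)
    exact ⟨h1, by omega, h3⟩

end Parking

section Assortments

variable {y x : List ℕ}

theorem PA.parkTo (h : PA y x) : ParkTo y.sum ∅ (x.zip y) (Ico 1 (y.sum + 1)) := by
  obtain ⟨hlen, hbd, hpark⟩ := h
  obtain ⟨fin, hfin⟩ := park_iff_exists_parkTo.1 hpark
  rwa [← hfin.eq_Ico_of_sum_eq (fun pr hpr => (hbd _ (List.of_mem_zip hpr).1).1)
    (by rw [List.map_snd_zip hlen.ge])]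

theorem PA.one_mem (h : PA y x) (hy : 0 < y.sum) : 1 ∈ x := by
  obtain ⟨⟨a, b⟩, hpr, hle⟩ := h.parkTo.exists_pref_le (u := 1) (by simp [hy]) (by simp)
  have ha : a ∈ x := (List.of_mem_zip hpr).1
  obtain rfl : a = 1 := le_antisymm hle (h.2.1 a ha).1
  exact ha

theorem deg_add_count_one (x : List ℕ) : deg x + x.count 1 = x.length := by
  rw [deg, List.count_eq_countP, ← List.countP_eq_length_filter, add_comm,
    List.length_eq_countP_add_countP (· == 1)]
  simp

theorem PA.deg_lt_length (h : PA y x) (hy : 0 < y.sum) : deg x < y.length := by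
  have := deg_add_count_one x
  have := List.count_pos_iff.2 (h.one_mem hy)
  have := h.1
  omega

theorem exists_perm_one_cons_of_deg (hx : deg x + 1 = x.length) :
    ∃ ws, x.Perm (1 :: ws) ∧ 1 ∉ ws := by
  have hcount : x.count 1 = 1 := by have := deg_add_count_one x; omega
  have h1 : 1 ∈ x := List.count_pos_iff.1 (by omega)
  refine ⟨x.erase 1, List.perm_cons_erase h1, ?_⟩
  rw [← List.count_eq_zero, List.count_erase_self, hcount]

theorem PAinv.perm (h : PAinv y x) {x' : List ℕ} (hx : x.Perm x') : PAinv y x' :=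
  fun _ hx' => h _ (hx.trans hx')

theorem chi_eq_of_paInv (hy : 0 < y.sum) (hx : PAinv y x) (hdeg : deg x = y.length - 1) :
    chi y = y.length - 1 := by
  refine IsGreatest.csSup_eq ⟨⟨x, hx, hdeg⟩, ?_⟩
  rintro _ ⟨x', hx', rfl⟩
  have := (hx' x' (.refl x')).deg_lt_length hy
  omega

theorem exists_paInv_deg_eq_chi (hy : 0 < y.sum) (hchi : 0 < chi y) :
    ∃ x, PAinv y x ∧ deg x = chi y := by
  have hbdd : BddAbove {d | ∃ x, PAinv y x ∧ deg x = d} := by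
    refine ⟨y.length, ?_⟩
    rintro _ ⟨x', hx', rfl⟩
    exact ((hx' x' (.refl x')).deg_lt_length hy).le
  rcases Set.eq_empty_or_nonempty {d | ∃ x, PAinv y x ∧ deg x = d} with hempty | hne
  · simp [chi, hempty] at hchi
  · exact Nat.sSup_mem hne hbdd

end Assortments

section SingleOne

variable {ws : List ℕ}

theorem PAinv.parkTo_insert_one {ya yb wa wb : List ℕ} {v : ℕ}
    (hinv : PAinv (ya ++ v :: yb) (1 :: ws)) (hws : ws.Perm (wa ++ wb))
    (hlen : wa.length = ya.length) :
    ParkTo (ya ++ v :: yb).sum ∅ (wa.zip ya ++ (1, v) :: wb.zip yb)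
      (Ico 1 ((ya ++ v :: yb).sum + 1)) := by
  have h := (hinv (wa ++ 1 :: wb) ((hws.cons 1).trans List.perm_middle.symm)).parkTo
  rwa [List.zip_append hlen, List.zip_cons_cons] at h

theorem forall_lt_fst_of_mem_zip {c : ℕ} {ys : List ℕ} (hws : ∀ w ∈ ws, c < w) :
    ∀ pr ∈ ws.zip ys, c < pr.1 :=
  fun _ hpr => hws _ (List.of_mem_zip hpr).1

variable {y₀ : ℕ} {ytail : List ℕ}

/-- Let the car preferring `w` arrive first and the `1`-car when `v` is due: the `1`-car must
then start at spot `1`, clear of spot `w`. -/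
theorem PAinv.lt_of_mem_tail (hinv : PAinv (y₀ :: ytail) (1 :: ws)) (hws : ∀ w ∈ ws, 1 < w)
    (hy₀ : 0 < y₀) {w v : ℕ} (hw : w ∈ ws) (hv : v ∈ ytail) : v < w := by
  obtain ⟨ya, yb, rfl⟩ := List.append_of_mem hv
  have hlen := (hinv _ (.refl _)).1
  simp only [List.length_cons, List.length_append] at hlen
  set rest := ws.erase w
  have hrest : rest.length = ya.length + yb.length := by
    rw [List.length_erase_of_mem hw]; omega
  have hperm : ws.Perm ((w :: rest.take ya.length) ++ rest.drop ya.length) := by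
    rw [List.cons_append, List.take_append_drop]
    exact List.perm_cons_erase hw
  have hpark := hinv.parkTo_insert_one (ya := y₀ :: ya) hperm (by simp; omega)
  rw [List.zip_cons_cons, List.cons_append] at hpark
  have hrest_gt : ∀ u ∈ rest, 1 < u := fun u hu => hws u (List.erase_subset hu)
  cases hpark with
  | cons _ _ _ _ s _ hs hpark =>
    obtain rfl := hs.eq_pref_of_empty.symm
    have hw2 := hws w hw
    obtain ⟨-, mid, hfront, hdisj, -⟩ := hpark.low_car_parks_at_one (c := 1)
      (forall_lt_fst_of_mem_zip fun u hu => hrest_gt u (List.take_subset _ _ hu))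
      (forall_lt_fst_of_mem_zip fun u hu => hrest_gt u (List.drop_subset _ _ hu))
      (disjoint_left.2 fun t ht ht' => by simp only [empty_union, mem_Ico] at ht ht'; omega)
      (fun t ht => by simp only [mem_Ico, List.sum_cons] at ht ⊢; omega) le_rfl
    have hwmid : w ∈ mid := hfront.subset (by simp [hy₀])
    have := disjoint_left.1 hdisj hwmid
    simp only [mem_Ico, not_and, not_lt] at this
    omega

/-- With the `1` last, spot `ℓ + 1` can only be taken by a car preferring exactly `ℓ + 1`. -/
theorem PAinv.succ_mem {yinit : List ℕ} {ℓ : ℕ} (hinv : PAinv (y₀ :: (yinit ++ [ℓ])) (1 :: ws))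
    (hws : ∀ w ∈ ws, 1 < w) (hy₀ : 0 < y₀) (hℓ : 0 < ℓ) : ℓ + 1 ∈ ws := by
  have hlt : ∀ w ∈ ws, ℓ < w := fun w hw => hinv.lt_of_mem_tail hws hy₀ hw (by simp)
  have hlen := (hinv _ (.refl _)).1
  simp only [List.length_cons, List.length_append, List.length_nil] at hlen
  have hpark := hinv.parkTo_insert_one (ya := y₀ :: yinit) (yb := []) (wa := ws) (wb := [])
    (by simp) (by simp; omega)
  obtain ⟨-, mid, hfront, -, hback⟩ := hpark.low_car_parks_at_one (c := ℓ)
    (forall_lt_fst_of_mem_zip hlt) (by simp) (disjoint_empty_left _)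
    (fun t ht => by simp only [mem_Ico, List.sum_cons, List.sum_append] at ht ⊢; omega) hℓ
  have hmem : ℓ + 1 ∈ mid := by
    have hfin : ℓ + 1 ∈ Ico 1 ((y₀ :: yinit ++ [ℓ]).sum + 1) := by
      simp only [mem_Ico, List.sum_cons, List.sum_append]; omega
    rw [hback.nil_eq] at hfin
    simpa [Nat.add_comm] using hfin
  obtain ⟨⟨w, a⟩, hpr, hle⟩ := hfront.exists_pref_le hmem (by simp)
  have hw := (List.of_mem_zip hpr).1
  obtain rfl : w = ℓ + 1 := le_antisymm hle (hlt w hw)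
  exact hw

theorem PAinv.le_of_mem {y : List ℕ} {c v : ℕ} (hinv : PAinv y (1 :: ws))
    (hws : ∀ w ∈ ws, c < w) (hc : 1 ≤ c) (hcy : c ≤ y.sum) (hv : v ∈ y) : c ≤ v := by
  obtain ⟨ya, yb, rfl⟩ := List.append_of_mem hv
  have hlen := (hinv _ (.refl _)).1
  simp only [List.length_cons, List.length_append] at hlen
  have hpark := hinv.parkTo_insert_one (.of_eq (List.take_append_drop ya.length ws).symm)
    (by simp; omega)
  exact (hpark.low_car_parks_at_one
    (forall_lt_fst_of_mem_zip fun u hu => hws u (List.take_subset _ _ hu))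
    (forall_lt_fst_of_mem_zip fun u hu => hws u (List.drop_subset _ _ hu))
    (disjoint_empty_left _) (Ico_subset_Ico_right (by omega)) hc).1

theorem PAinv.tail_eq_replicate (hy : ∀ v ∈ y₀ :: ytail, 0 < v)
    (hinv : PAinv (y₀ :: ytail) (1 :: ws)) (h1 : 1 ∉ ws) :
    ∃ b ≤ y₀, ytail = List.replicate ytail.length b := by
  have hws : ∀ w ∈ ws, 1 < w := fun w hw =>
    lt_of_le_of_ne ((hinv _ (.refl _)).2.1 w (List.mem_cons_of_mem _ hw)).1
      (fun h => h1 (h ▸ hw))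
  rcases List.eq_nil_or_concat ytail with rfl | ⟨yinit, ℓ, rfl⟩
  · exact ⟨0, Nat.zero_le _, rfl⟩
  rw [List.concat_eq_append] at hy hinv ⊢
  have hy₀ := hy y₀ List.mem_cons_self
  have hℓ := hy ℓ (by simp)
  have hsucc := hinv.succ_mem hws hy₀ hℓ
  have hle : ∀ v ∈ y₀ :: (yinit ++ [ℓ]), ℓ ≤ v := fun v hv =>
    hinv.le_of_mem (fun w hw => hinv.lt_of_mem_tail hws hy₀ hw (by simp)) hℓ
      (List.le_sum_of_mem (by simp)) hv
  refine ⟨ℓ, hle y₀ List.mem_cons_self, List.eq_replicate_iff.2 ⟨rfl, fun v hv => ?_⟩⟩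
  exact le_antisymm (Nat.lt_succ_iff.1 (hinv.lt_of_mem_tail hws hy₀ hsucc hv))
    (hle v (List.mem_cons_of_mem _ hv))

end SingleOne

theorem exists_eq_replicate_append_of_perm {α : Type*} {a c : α} {k : ℕ} {l : List α}
    (h : l.Perm (a :: List.replicate k c)) :
    ∃ p q, p + q = k ∧ l = List.replicate p c ++ a :: List.replicate q c := by
  induction l generalizing k with
  | nil => exact absurd h.length_eq (by simp)
  | cons v t ih =>
    by_cases hva : v = a
    · subst hva
      exact ⟨0, k, zero_add k, by simp [List.perm_replicate.1 h.cons_inv]⟩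
    obtain ⟨k, rfl⟩ : ∃ k', k = k' + 1 := Nat.exists_eq_add_one.2 (Nat.pos_of_ne_zero
      (by rintro rfl; simp [hva] at h))
    obtain rfl : v = c := by
      simpa [hva] using h.subset List.mem_cons_self
    rw [List.replicate_succ] at h
    obtain ⟨p, q, hpq, rfl⟩ := ih (h.trans (List.Perm.swap v a _)).cons_inv
    exact ⟨p + 1, q, by omega, by simp [List.replicate_succ]⟩

section Construction

variable {m : ℕ}

theorem parkTo_one_before_Ico {b c : ℕ} (hbc : b ≤ c) (hcm : c ≤ m) :
    ParkTo m (Ico (b + 1) (c + 1)) [(1, b)] (Ico 1 (c + 1)) := by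
  refine .cons _ 1 b [] 1 _ (parksAt_of_fitsAt_pref ⟨le_rfl, by omega, fun t ht => ?_⟩) ?_
  · simp only [mem_Ico] at ht ⊢; omega
  · rw [union_comm, add_comm 1 b, Ico_union_Ico_eq_Ico (by omega) (by omega)]
    exact .nil _

theorem pa_replicate_append_one_cons {b y₀ p q : ℕ} (hb : 1 ≤ b) (hby : b ≤ y₀) :
    PA (y₀ :: List.replicate (p + q) b)
      (List.replicate p (b + 1) ++ 1 :: List.replicate q (b + 1)) := by
  have hsum : (y₀ :: List.replicate (p + q) b).sum = y₀ + (p + q) * b := by simp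
  refine ⟨by simp; omega, fun v hv => ?_, park_iff_exists_parkTo.2 ?_⟩
  · simp only [List.mem_append, List.mem_replicate, List.mem_cons] at hv
    rw [hsum]
    rcases hv with ⟨hp, rfl⟩ | rfl | ⟨hq, rfl⟩
    · exact ⟨by omega, by nlinarith [Nat.pos_of_ne_zero hp]⟩
    · exact ⟨le_rfl, by omega⟩
    · exact ⟨by omega, by nlinarith [Nat.pos_of_ne_zero hq]⟩
  rw [hsum]
  cases p with
  | zero =>
    have h₁ := parkTo_Ico_of_prefs_le (m := y₀ + (0 + q) * b) (a := 1) (c := 0) (l := [(1, y₀)])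
      (by simp; omega) le_rfl (by simp)
    have h₂ := parkTo_Ico_of_prefs_le (m := y₀ + (0 + q) * b) (a := 1) (c := y₀)
      (l := List.replicate q (b + 1, b)) (by simp; omega) (by omega) (by simp)
    simp only [zero_add, List.map_cons, List.map_nil, List.sum_cons, List.sum_nil,
      add_zero] at h₁ h₂
    exact ⟨_, by simpa [List.zip_replicate] using h₁.append h₂⟩
  | succ p =>
    have hy : List.replicate (p + 1 + q) b = List.replicate p b ++ b :: List.replicate q b := by
      rw [add_assoc, add_comm 1 q, List.replicate_add, List.replicate_succ]
    rw [hy]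
    simp only [List.replicate_succ, List.cons_append, List.zip_cons_cons, List.zip_append,
      List.length_replicate, List.zip_replicate, min_self]
    have h₁ := parkTo_Ico_of_prefs_le (m := y₀ + (p + 1 + q) * b) (a := b + 1) (c := b)
      (l := (b + 1, y₀) :: List.replicate p (b + 1, b)) (by simp; omega) le_rfl
      (by simp; nlinarith)
    simp only [List.map_cons, List.map_replicate, List.sum_cons, List.sum_replicate,
      smul_eq_mul, Ico_self] at h₁
    have h₂ := parkTo_one_before_Ico (m := y₀ + (p + 1 + q) * b) (b := b)
      (c := b + (y₀ + p * b)) (by omega) (by nlinarith)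
    have h₃ := parkTo_Ico_of_prefs_le (m := y₀ + (p + 1 + q) * b) (a := 1)
      (c := b + (y₀ + p * b)) (l := List.replicate q (b + 1, b)) (by simp; omega) (by omega)
      (by simp; nlinarith)
    exact ⟨_, by simpa using h₁.append (h₂.append h₃)⟩

end Construction

theorem paInv_one_cons_replicate {b y₀ k : ℕ} (hb : 1 ≤ b) (hby : b ≤ y₀) :
    PAinv (y₀ :: List.replicate k b) (1 :: List.replicate k (b + 1)) := by
  intro x hx
  obtain ⟨p, q, rfl, rfl⟩ := exists_eq_replicate_append_of_perm hx.symm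
  exact pa_replicate_append_one_cons hb hby

theorem cons_getD_iff_eq_replicate {y₀ : ℕ} {t : List ℕ} :
    ((y₀ :: t).getD 1 0 ≤ (y₀ :: t).getD 0 0 ∧
      ∀ i j, 1 ≤ i → i < t.length + 1 → 1 ≤ j → j < t.length + 1 →
        (y₀ :: t).getD i 0 = (y₀ :: t).getD j 0) ↔
      ∃ b ≤ y₀, t = List.replicate t.length b := by
  constructor
  · rintro ⟨hle, heq⟩
    refine ⟨t.getD 0 0, by simpa using hle, List.eq_replicate_iff.2 ⟨rfl, fun v hv => ?_⟩⟩
    obtain ⟨i, hi, rfl⟩ := List.getElem_of_mem hv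
    simpa [hi] using heq (i + 1) 1 (by omega) (by omega) le_rfl (by omega)
  · rintro ⟨b, hb, ht⟩
    have hget : ∀ i, 1 ≤ i → i < t.length + 1 → (y₀ :: t).getD i 0 = b := by
      intro i hi1 hi
      obtain ⟨i, rfl⟩ := Nat.exists_eq_add_one.2 hi1
      rw [List.getD_cons_succ, ht, List.getD_replicate _ (by simpa using hi)]
    refine ⟨?_, fun i j hi1 hi hj1 hj => by rw [hget i hi1 hi, hget j hj1 hj]⟩
    rcases Nat.eq_zero_or_pos t.length with h0 | hpos
    · simp [List.length_eq_zero_iff.1 h0]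
    · rw [hget 1 le_rfl (by omega)]
      exact hb

/-- `χ(y) = n − 1` iff `y₁ ≥ y₂` and `y₂ = y₃ = ⋯ = yₙ`. -/
theorem stmt1 (n : ℕ) (hn : 2 ≤ n) (y : List ℕ) (hylen : y.length = n)
    (hypos : ∀ v ∈ y, 0 < v) :
    chi y = n - 1 ↔
      (y.getD 1 0 ≤ y.getD 0 0 ∧
        ∀ i j, 1 ≤ i → i < n → 1 ≤ j → j < n → y.getD i 0 = y.getD j 0) := by
  obtain ⟨y₀, ytail, rfl⟩ := List.exists_cons_of_length_pos (by omega : 0 < y.length)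
  have hsum : 0 < (y₀ :: ytail).sum :=
    lt_of_lt_of_le (hypos y₀ List.mem_cons_self) (List.le_sum_of_mem List.mem_cons_self)
  simp only [List.length_cons] at hylen
  subst hylen
  rw [cons_getD_iff_eq_replicate]
  constructor
  · intro hchi
    obtain ⟨x, hx, hdeg⟩ := exists_paInv_deg_eq_chi hsum (by omega)
    have hxlen := (hx x (.refl x)).1
    simp only [List.length_cons] at hxlen
    obtain ⟨ws, hperm, h1⟩ := exists_perm_one_cons_of_deg (x := x) (by omega)
    exact (hx.perm hperm).tail_eq_replicate hypos h1
  · rintro ⟨b, hb, hyt⟩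
    have hb1 : 1 ≤ b := by
      refine hypos b (List.mem_cons_of_mem _ ?_)
      rw [hyt, List.mem_replicate]
      exact ⟨by omega, rfl⟩
    have hinv := paInv_one_cons_replicate (k := ytail.length) hb1 hb
    rw [← hyt] at hinv
    refine chi_eq_of_paInv hsum hinv ?_
    simp [deg, Nat.pos_iff_ne_zero.1 hb1]
end

section
/- Let y = (b, a, a, ..., a) ∈ ℕ^n with n ≥ 2 (first car has length b, the remaining n−1 cars have length a), and let x ∈ [m]^n where m = b + (n−1)a. If a divides b, then x ∈ PAinv_n(y) if and only if for every i ∈ [n], the i-th smallest entry x_{(i)} belongs to {1 + (k−1)a : k ∈ [i]}. -/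
/-!
Write `b = c * a`. Necessity: park the car of entry `v` first; it occupies `[v, v + b)`, so the
spots before `v` are filled by cars of length `a` alone and `a ∣ v - 1`. If the `(i+1)`-st smallest
entry exceeded `1 + i * a`, parking that car first would leave the spots `1, …, 1 + i * a` to at
most `i` cars of length `a`.
Sufficiency: with every preference at the start of a block of `a` spots, the big car covers `c`
whole blocks and every further car parks at the start of the first free block at or after its
preferred one. The small cars thus behave like unit cars on the free blocks, and they all park as
long as, for every `t`, at most as many of them prefer a block `≥ t` as there are free blocks
`≥ t`; the sorted condition is exactly what makes this count hold after the big car has parked.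
-/

open Finset

lemma FitsAt.disjoint {occ : Finset ℕ} {m p len s : ℕ} (h : FitsAt occ m p len s) :
    Disjoint occ (Ico s (s + len)) :=
  disjoint_right.mpr h.2.2

lemma FitsAt.Ico_subset_Icc {occ : Finset ℕ} {m p len s : ℕ} (h : FitsAt occ m p len s)
    (hp : 1 ≤ p) : Ico s (s + len) ⊆ Icc 1 m := by
  intro t ht
  simp only [mem_Ico, mem_Icc] at ht ⊢
  have := h.1
  have := h.2.1
  omega

lemma parksAt_empty_iff {m p len s : ℕ} : ParksAt ∅ m p len s ↔ s = p ∧ p + len ≤ m + 1 := by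
  constructor
  · rintro ⟨⟨hps, hsm, -⟩, hmin⟩
    obtain rfl : s = p := by
      by_contra hne
      exact hmin p (by omega) ⟨le_rfl, by omega, by simp⟩
    exact ⟨rfl, hsm⟩
  · rintro ⟨rfl, h⟩
    exact ⟨⟨le_rfl, h, by simp⟩, fun s' hs' hfit => absurd hfit.1 (by omega)⟩

lemma park_cons_empty_iff {m p len : ℕ} {l : List (ℕ × ℕ)} :
    Park m ∅ ((p, len) :: l) ↔ p + len ≤ m + 1 ∧ Park m (Ico p (p + len)) l := by
  constructor
  · rintro (_ | ⟨_, _, _, _, s, hs, hl⟩)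
    obtain ⟨rfl, h⟩ := parksAt_empty_iff.mp hs
    exact ⟨h, by simpa using hl⟩
  · rintro ⟨h, hl⟩
    exact Park.cons _ _ _ _ p (parksAt_empty_iff.mpr ⟨rfl, h⟩) (by simpa using hl)

section FullLot

variable {m : ℕ} {occ : Finset ℕ} {l : List (ℕ × ℕ)}

lemma FitsAt.card_union {p len s : ℕ} (h : FitsAt occ m p len s) :
    #(occ ∪ Ico s (s + len)) = #occ + len := by
  rw [card_union_of_disjoint h.disjoint, Nat.card_Ico, Nat.add_sub_cancel_left]

lemma eq_Icc_of_subset_of_card_eq (hocc : occ ⊆ Icc 1 m) (hcard : #occ = m) : occ = Icc 1 m :=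
  eq_of_subset_of_card_le hocc (by simp [hcard])

theorem Park.le_card_inter_add_sum (h : Park m occ l) (hpref : ∀ p ∈ l, 1 ≤ p.1)
    (hocc : occ ⊆ Icc 1 m) (hfull : #occ + (l.map Prod.snd).sum = m) {t : ℕ} (ht : t ≤ m) :
    t ≤ #(occ ∩ Icc 1 t) + ((l.filter (·.1 ≤ t)).map Prod.snd).sum := by
  induction h with
  | nil occ =>
    obtain rfl := eq_Icc_of_subset_of_card_eq hocc (by simpa using hfull)
    simp [inter_eq_right.mpr (Icc_subset_Icc_right ht)]
  | cons occ p len rest s hs _ ih =>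
    have hp : 1 ≤ p := hpref _ List.mem_cons_self
    have ih := ih (fun q hq => hpref q (List.mem_cons_of_mem _ hq))
      (union_subset hocc (hs.1.Ico_subset_Icc hp))
      (by rw [hs.1.card_union]; simp only [List.map_cons, List.sum_cons] at hfull; omega)
    have hsplit : #((occ ∪ Ico s (s + len)) ∩ Icc 1 t)
        ≤ #(occ ∩ Icc 1 t) + #(Ico s (s + len) ∩ Icc 1 t) := by
      rw [union_inter_distrib_right]
      exact card_union_le _ _
    by_cases hpt : p ≤ t
    · have : #(Ico s (s + len) ∩ Icc 1 t) ≤ len :=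
        (card_le_card inter_subset_left).trans (by simp)
      simp only [List.filter_cons, hpt, decide_true, if_true, List.map_cons, List.sum_cons]
      omega
    · have hempty : Ico s (s + len) ∩ Icc 1 t = ∅ := by
        have := hs.1.1
        ext u
        simp only [mem_inter, mem_Ico, mem_Icc, notMem_empty, iff_false]
        omega
      simp only [List.filter_cons, hpt, decide_false, Bool.false_eq_true, if_false]
      rw [hempty, card_empty, add_zero] at hsplit
      omega

theorem Park.dvd_sub_one {a v : ℕ} (h : Park m occ l) (hlen : ∀ p ∈ l, p.2 = a)
    (hpref : ∀ p ∈ l, 1 ≤ p.1) (hocc : occ ⊆ Icc 1 m) (hfull : #occ + (l.map Prod.snd).sum = m)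
    (hv : v ∈ occ) (hdvd : a ∣ #(occ ∩ Ico 1 v)) : a ∣ v - 1 := by
  induction h with
  | nil occ =>
    obtain rfl := eq_Icc_of_subset_of_card_eq hocc (by simpa using hfull)
    have hvm : v ≤ m := (mem_Icc.mp hv).2
    rwa [inter_eq_right.mpr (Ico_subset_Icc_self.trans (Icc_subset_Icc_right hvm)),
      Nat.card_Ico] at hdvd
  | cons occ p len rest s hs _ ih =>
    obtain rfl : len = a := hlen _ List.mem_cons_self
    have hp : 1 ≤ p := hpref _ List.mem_cons_self
    refine ih (fun q hq => hlen q (List.mem_cons_of_mem _ hq))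
      (fun q hq => hpref q (List.mem_cons_of_mem _ hq))
      (union_subset hocc (hs.1.Ico_subset_Icc hp))
      (by rw [hs.1.card_union]; simp only [List.map_cons, List.sum_cons] at hfull; omega)
      (mem_union_left _ hv) ?_
    rw [union_inter_distrib_right, card_union_of_disjoint
      (hs.1.disjoint.mono inter_subset_left inter_subset_left)]
    refine dvd_add hdvd ?_
    -- the spot `v` is occupied, so the new car lies entirely before or entirely after it
    have hvs : v ∉ Ico s (s + len) := fun h => hs.1.2.2 v h hv
    rw [mem_Ico] at hvs
    rcases le_or_gt v s with hle | hlt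
    · rw [Ico_inter_Ico, Ico_eq_empty_of_le (by omega)]
      simp
    · rw [inter_eq_left.mpr (fun u hu => by simp only [mem_Ico] at hu ⊢; have := hs.1.1; omega)]
      simp

end FullLot

section Blocks

variable {a : ℕ}

/-- Block `j` consists of the spots `1 + j * a, …, (j + 1) * a`; blocks are numbered from `0`. -/
def blocks (a : ℕ) (G : Finset ℕ) : Finset ℕ :=
  G.biUnion fun j => Ico (1 + j * a) (1 + j * a + a)

lemma mem_block_iff (ha : 0 < a) {j t : ℕ} :
    t ∈ Ico (1 + j * a) (1 + j * a + a) ↔ 1 ≤ t ∧ (t - 1) / a = j := by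
  rw [mem_Ico]
  constructor
  · rintro ⟨h1, h2⟩
    exact ⟨by omega, Nat.div_eq_of_lt_le (by omega) (by rw [add_one_mul]; omega)⟩
  · rintro ⟨h1, rfl⟩
    have := Nat.div_mul_le_self (t - 1) a
    have := Nat.lt_div_mul_add (a := t - 1) ha
    omega

lemma mem_blocks (ha : 0 < a) {G : Finset ℕ} {t : ℕ} :
    t ∈ blocks a G ↔ 1 ≤ t ∧ (t - 1) / a ∈ G := by
  simp only [blocks, mem_biUnion, mem_block_iff ha]
  constructor
  · rintro ⟨j, hj, h1, rfl⟩
    exact ⟨h1, hj⟩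
  · rintro ⟨h1, hG⟩
    exact ⟨_, hG, h1, rfl⟩

lemma blocks_Ico (ha : 0 < a) (u w : ℕ) : blocks a (Ico u w) = Ico (1 + u * a) (1 + w * a) := by
  ext t
  rw [mem_blocks ha, mem_Ico, mem_Ico, Nat.le_div_iff_mul_le ha, Nat.div_lt_iff_lt_mul ha]
  omega

lemma blocks_insert (j : ℕ) (G : Finset ℕ) :
    blocks a (insert j G) = blocks a G ∪ Ico (1 + j * a) (1 + j * a + a) := by
  rw [blocks, biUnion_insert, union_comm]
  rfl

lemma parksAt_blocks (ha : 0 < a) {C q j : ℕ} {G : Finset ℕ} (hjC : j < C) (hqj : q ≤ j)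
    (hjG : j ∉ G) (hfirst : ∀ i, q ≤ i → i < j → i ∈ G) :
    ParksAt (blocks a G) (C * a) (1 + q * a) a (1 + j * a) := by
  have hqa : q * a ≤ j * a := Nat.mul_le_mul_right a hqj
  have hjCa : (j + 1) * a ≤ C * a := Nat.mul_le_mul_right a hjC
  rw [add_one_mul] at hjCa
  refine ⟨⟨by omega, by omega, fun t ht htG => ?_⟩, fun s hs hfit => ?_⟩
  · exact hjG (((mem_block_iff ha).mp ht).2 ▸ ((mem_blocks ha).mp htG).2)
  · obtain ⟨hqs, -, hfree⟩ := hfit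
    refine hfree s (by simp [ha]) ((mem_blocks ha).mpr ⟨by omega, hfirst _ ?_ ?_⟩)
    · rw [Nat.le_div_iff_mul_le ha]
      omega
    · rw [Nat.div_lt_iff_lt_mul ha]
      omega

lemma countP_le_card_filter_erase {q j : ℕ} {Q : List ℕ} {F : Finset ℕ} (hjF : j ∈ F)
    (hqj : q ≤ j) (hmin : ∀ i ∈ F, q ≤ i → j ≤ i)
    (hall : ∀ t, (q :: Q).countP (t ≤ ·) ≤ #(F.filter (t ≤ ·))) (t : ℕ) :
    Q.countP (t ≤ ·) ≤ #((F.erase j).filter (t ≤ ·)) := by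
  rw [filter_erase]
  rcases le_or_gt t j with htj | hjt
  · -- no block of `F` lies in `[q, j)`, so thresholds `t` and `min t q` see the same free blocks
    have hfilter : F.filter (min t q ≤ ·) = F.filter (t ≤ ·) := by
      ext i
      simp only [mem_filter, and_congr_right_iff]
      intro hi
      have := hmin i hi
      omega
    have hmono : Q.countP (t ≤ ·) ≤ Q.countP (min t q ≤ ·) :=
      List.countP_mono_left fun i _ h => by simp only [decide_eq_true_eq] at h ⊢; omega
    have := hall (min t q)
    rw [hfilter, List.countP_cons, if_pos (by simp)] at this
    rw [card_erase_of_mem (s := F.filter (t ≤ ·)) (mem_filter.mpr ⟨hjF, htj⟩)]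
    omega
  · rw [erase_eq_of_notMem (by simp only [mem_filter, not_and, not_le]; exact fun _ => hjt)]
    have := hall t
    rwa [List.countP_cons, if_neg (by simp only [decide_eq_true_eq]; omega), add_zero] at this

theorem park_blocks (ha : 0 < a) {C : ℕ} (Q : List ℕ) (G : Finset ℕ)
    (hall : ∀ t, Q.countP (t ≤ ·) ≤ #((range C \ G).filter (t ≤ ·))) :
    Park (C * a) (blocks a G) (Q.map fun q => (1 + q * a, a)) := by
  induction Q generalizing G with
  | nil => exact Park.nil _
  | cons q Q ih =>
    have hne : ((range C \ G).filter (q ≤ ·)).Nonempty := by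
      rw [← card_pos]
      have := hall q
      rw [List.countP_cons, if_pos (by simp)] at this
      omega
    set j := ((range C \ G).filter (q ≤ ·)).min' hne
    obtain ⟨hjF, hqj⟩ := mem_filter.mp (min'_mem _ hne)
    have hmin : ∀ i ∈ range C \ G, q ≤ i → j ≤ i :=
      fun i hi hqi => min'_le _ _ (mem_filter.mpr ⟨hi, hqi⟩)
    obtain ⟨hjC, hjG⟩ : j < C ∧ j ∉ G := by simpa using hjF
    refine Park.cons _ _ _ _ _ (parksAt_blocks ha hjC hqj hjG fun i hqi hij => ?_) ?_
    · by_contra hiG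
      exact absurd (hmin i (mem_sdiff.mpr ⟨mem_range.mpr (by omega), hiG⟩) hqi) (by omega)
    · rw [← blocks_insert]
      exact ih _ fun t => by
        rw [sdiff_insert]
        exact countP_le_card_filter_erase hjF hqj hmin hall t

end Blocks

lemma countP_le_card_filter_sdiff_Ico {c q₀ : ℕ} {Q : List ℕ} (hc : 0 < c)
    (hall : ∀ t, (q₀ :: Q).countP (t ≤ ·) ≤ Q.length + 1 - t) (t : ℕ) :
    Q.countP (t ≤ ·) ≤ #((range (c + Q.length) \ Ico q₀ (q₀ + c)).filter (t ≤ ·)) := by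
  have hfilter : (range (c + Q.length) \ Ico q₀ (q₀ + c)).filter (t ≤ ·)
      = Ico t (c + Q.length) \ Ico q₀ (q₀ + c) := by
    ext i
    simp only [mem_filter, mem_sdiff, mem_range, mem_Ico]
    omega
  rw [hfilter]
  have hall_t := hall t
  rw [List.countP_cons] at hall_t
  rcases le_or_gt t q₀ with htq | hqt
  · have := le_card_sdiff (Ico q₀ (q₀ + c)) (Ico t (c + Q.length))
    simp only [Nat.card_Ico, htq, decide_true, if_true] at this hall_t
    omega
  · have hmono : Q.countP (t ≤ ·) ≤ Q.countP (q₀ + 1 ≤ ·) :=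
      List.countP_mono_left fun i _ h => by simp only [decide_eq_true_eq] at h ⊢; omega
    have hall_q := hall (q₀ + 1)
    have hsub : Ico (max t (q₀ + c)) (c + Q.length) ⊆ Ico t (c + Q.length) \ Ico q₀ (q₀ + c) := by
      intro i
      simp only [mem_sdiff, mem_Ico]
      omega
    have := card_le_card hsub
    simp only [List.countP_cons, Nat.card_Ico, decide_eq_true_eq] at this hall_t hall_q
    split_ifs at hall_t hall_q <;> omega

theorem park_cons_blocks {a c q₀ : ℕ} {Q : List ℕ} (ha : 0 < a) (hc : 0 < c)
    (hall : ∀ t, (q₀ :: Q).countP (t ≤ ·) ≤ Q.length + 1 - t) :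
    Park (a * c + Q.length * a) ∅ ((1 + q₀ * a, a * c) :: Q.map fun q => (1 + q * a, a)) := by
  have hq₀ : q₀ ≤ Q.length := by
    have := hall q₀
    rw [List.countP_cons, if_pos (by simp)] at this
    omega
  have hlot : a * c + Q.length * a = (c + Q.length) * a := by ring
  refine park_cons_empty_iff.mpr ⟨?_, ?_⟩
  · have := Nat.mul_le_mul_right a hq₀
    rw [hlot, add_mul, mul_comm c]
    omega
  · rw [show 1 + q₀ * a + a * c = 1 + (q₀ + c) * a by ring, ← blocks_Ico ha, hlot]
    exact park_blocks ha Q _ (countP_le_card_filter_sdiff_Ico hc hall)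

lemma List.zip_replicate_of_length_eq {α β : Type*} {l : List α} {k : ℕ} (h : l.length = k)
    (b : β) : l.zip (List.replicate k b) = l.map (·, b) := by
  subst h
  induction l with
  | nil => rfl
  | cons v l ih => simp [List.replicate_succ, ih]

theorem pA_map_of_countP_le {a c : ℕ} {X : List ℕ} (ha : 0 < a) (hc : 0 < c) (hX : X ≠ [])
    (hall : ∀ t, X.countP (t ≤ ·) ≤ X.length - t) :
    PA (a * c :: List.replicate (X.length - 1) a) (X.map (1 + · * a)) := by
  obtain ⟨q₀, Q, rfl⟩ := List.exists_cons_of_ne_nil hX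
  simp only [List.length_cons, Nat.add_sub_cancel] at hall ⊢
  refine ⟨by simp, fun v hv => ?_, ?_⟩
  · obtain ⟨q, hq, rfl⟩ := List.mem_map.mp hv
    have hqQ : q ≤ Q.length := by
      have := hall q
      have : 0 < (q₀ :: Q).countP (q ≤ ·) := List.countP_pos_iff.mpr ⟨q, hq, by simp⟩
      omega
    have := Nat.mul_le_mul_right a hqQ
    have := Nat.mul_pos ha hc
    simp only [List.sum_cons, List.sum_replicate, smul_eq_mul]
    omega
  · simp only [List.sum_cons, List.sum_replicate, smul_eq_mul, List.map_cons, List.zip_cons_cons]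
    rw [List.zip_replicate_of_length_eq (by simp), List.map_map]
    exact park_cons_blocks ha hc hall

theorem pAinv_map_of_countP_le {a c : ℕ} {X : List ℕ} (ha : 0 < a) (hc : 0 < c) (hX : X ≠ [])
    (hall : ∀ t, X.countP (t ≤ ·) ≤ X.length - t) :
    PAinv (a * c :: List.replicate (X.length - 1) a) (X.map (1 + · * a)) := by
  intro x' hx'
  obtain ⟨X', rfl, hX'⟩ := (congrFun₂ (List.eq_map_comp_perm _) x' X).mpr hx'.symm
  rw [← hX'.length_eq]
  refine pA_map_of_countP_le ha hc (by rintro rfl; simp_all) fun t => ?_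
  rw [hX'.countP_eq, hX'.length_eq]
  exact hall t

lemma List.Pairwise.countP_le_le_of_lt_getElem {xs : List ℕ} (hs : xs.Pairwise (· ≤ ·)) {i t : ℕ}
    (hi : i < xs.length) (ht : t < xs[i]) : xs.countP (· ≤ t) ≤ i := by
  rw [← List.take_append_drop i xs, List.countP_append, (List.countP_eq_zero (l := xs.drop i)).mpr,
    add_zero]
  · exact List.countP_le_length.trans (by simp)
  · intro w hw
    obtain ⟨k, hk, rfl⟩ := List.getElem_of_mem hw
    have hik : i + k < xs.length := by simp only [List.length_drop] at hk; omega
    have := hs.rel_get_of_le (a := ⟨i, hi⟩) (b := ⟨i + k, hik⟩) (by simp)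
    simp only [List.get_eq_getElem, List.getElem_drop, decide_eq_true_eq, not_le] at this ⊢
    omega

lemma List.countP_le_length_sub {l : List ℕ} (h : ∀ (i) (hi : i < l.length), l[i] ≤ i) (t : ℕ) :
    l.countP (t ≤ ·) ≤ l.length - t := by
  conv_lhs => rw [← List.take_append_drop t l]
  rw [List.countP_append, List.countP_eq_zero.mpr, zero_add]
  · exact List.countP_le_length.trans (by simp)
  · intro w hw
    obtain ⟨k, hk, rfl⟩ := List.getElem_of_mem hw
    have hkt : k < t := by simp only [List.length_take, lt_inf_iff] at hk; omega
    have := h k (by simp only [List.length_take, lt_inf_iff] at hk; omega)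
    simp only [List.getElem_take, decide_eq_true_eq, not_le]
    omega

lemma List.exists_eq_map_of_getElem_le {a : ℕ} (ha : 0 < a) {xs : List ℕ}
    (h : ∀ (i) (hi : i < xs.length), ∃ q ≤ i, xs[i] = 1 + q * a) :
    ∃ X : List ℕ, xs = X.map (1 + · * a) ∧ ∀ (i) (hi : i < X.length), X[i] ≤ i := by
  refine ⟨xs.map fun v => (v - 1) / a, List.ext_getElem (by simp) fun i h₁ h₂ => ?_, fun i hi => ?_⟩
  · obtain ⟨q, -, hq⟩ := h i h₁
    simp [hq, ha]
  · obtain ⟨q, hqi, hq⟩ := h i (by simpa using hi)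
    simpa [hq, ha] using hqi

section Invariant

variable {a b k : ℕ} {x : List ℕ}

lemma PAinv.of_perm {y x' : List ℕ} (hinv : PAinv y x) (hx : x.Perm x') : PAinv y x' :=
  fun _ h => hinv _ (hx.trans h)

lemma PAinv.park_erase (hinv : PAinv (b :: List.replicate k a) x) {v : ℕ} (hv : v ∈ x) :
    v + b ≤ b + k * a + 1 ∧ Park (b + k * a) (Ico v (v + b)) ((x.erase v).map (·, a)) := by
  obtain ⟨hlen, -, hpark⟩ := hinv _ (List.perm_cons_erase hv)
  have hsum : (b :: List.replicate k a).sum = b + k * a := by simp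
  rw [hsum, List.zip_cons_cons, List.zip_replicate_of_length_eq (by simpa using hlen)] at hpark
  exact park_cons_empty_iff.mp hpark

lemma PAinv.exists_eq_one_add_mul (hinv : PAinv (b :: List.replicate k a) x) (hb : 0 < b)
    {v : ℕ} (hv : v ∈ x) : ∃ q, v = 1 + q * a := by
  obtain ⟨hlen, hbound, -⟩ := hinv x (List.Perm.refl x)
  obtain ⟨hvb, hpark⟩ := hinv.park_erase hv
  have hv1 := (hbound v hv).1
  have hk : (x.erase v).length = k := by simp [List.length_erase_of_mem hv, hlen]
  -- the spots before `v` are filled by cars of length `a` only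
  obtain ⟨q, hq⟩ : a ∣ v - 1 := by
    refine hpark.dvd_sub_one (by simp) ?_ ?_ ?_ (by simp [hb]) ?_
    · simpa using fun w hw => (hbound w (List.mem_of_mem_erase hw)).1
    · intro t
      simp only [mem_Ico, mem_Icc]
      omega
    · simp [Function.comp_def, hk]
    · rw [Ico_inter_Ico, Ico_eq_empty_of_le (by omega)]
      simp
  exact ⟨q, by rw [mul_comm]; omega⟩

lemma PAinv.getElem_le (hinv : PAinv (b :: List.replicate k a) x) {xs : List ℕ}
    (hperm : xs.Perm x) (hsort : xs.Pairwise (· ≤ ·)) {i : ℕ} (hi : i < xs.length) :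
    xs[i] ≤ 1 + i * a := by
  by_contra! hlt
  have hv : xs[i] ∈ x := hperm.subset (List.getElem_mem hi)
  obtain ⟨hlen, hbound, -⟩ := hinv x (List.Perm.refl x)
  obtain ⟨hvb, hpark⟩ := hinv.park_erase hv
  have hvm := hbound _ hv
  have hk : (x.erase xs[i]).length = k := by simp [List.length_erase_of_mem hv, hlen]
  -- with `xs[i]` parked first, spots `1, …, 1 + i * a` are left to at most `i` cars of length `a`
  have hcover := hpark.le_card_inter_add_sum
    (by simpa using fun w hw => (hbound w (List.mem_of_mem_erase hw)).1)
    (fun t ht => by simp only [mem_Ico, mem_Icc] at ht ⊢; omega) (by simp [Function.comp_def, hk])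
    (t := 1 + i * a) (by simp only [List.sum_cons, List.sum_replicate, smul_eq_mul] at hvm; omega)
  have hcount : (x.erase xs[i]).countP (· ≤ 1 + i * a) ≤ i :=
    List.erase_sublist.countP_le.trans
      ((hperm.countP_eq _).symm.trans_le (hsort.countP_le_le_of_lt_getElem hi hlt))
  have hempty : Ico xs[i] (xs[i] + b) ∩ Icc 1 (1 + i * a) = ∅ := by
    ext
    simp only [mem_inter, mem_Ico, mem_Icc, notMem_empty, iff_false]
    omega
  rw [hempty] at hcover
  simp only [card_empty, List.filter_map, Function.comp_def, List.map_map, List.map_const',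
    ← List.countP_eq_length_filter, List.sum_replicate, smul_eq_mul, zero_add] at hcover
  have := Nat.mul_le_mul_right a hcount
  omega

end Invariant

theorem stmt2_general (n a b : ℕ) (hn : 2 ≤ n) (ha : 0 < a) (hb : 0 < b)
    (y : List ℕ) (hy : y = b :: List.replicate (n - 1) a)
    (x : List ℕ) (hxlen : x.length = n)
    (xs : List ℕ) (hperm : xs.Perm x) (hsort : xs.Pairwise (· ≤ ·))
    (hdvd : a ∣ b) :
    PAinv y x ↔
      ∀ i < n, ∃ k, 1 ≤ k ∧ k ≤ i + 1 ∧ xs.getD i 0 = 1 + (k - 1) * a := by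
  subst hy
  have hxs : xs.length = n := hperm.length_eq.trans hxlen
  constructor
  · intro hinv i hi
    have hi' : i < xs.length := hxs ▸ hi
    obtain ⟨q, hq⟩ := hinv.exists_eq_one_add_mul hb (hperm.subset (List.getElem_mem hi'))
    have hqi : q ≤ i := by
      have := hinv.getElem_le hperm hsort hi'
      exact Nat.le_of_mul_le_mul_right (by omega) ha
    exact ⟨q + 1, by omega, by omega, by rw [List.getD_eq_getElem _ _ hi', hq]; simp⟩
  · intro h
    obtain ⟨c, rfl⟩ := hdvd
    obtain ⟨X, rfl, hX⟩ := List.exists_eq_map_of_getElem_le ha fun i hi => by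
      obtain ⟨k, hk1, hki, hk⟩ := h i (hxs ▸ hi)
      exact ⟨k - 1, by omega, by rwa [List.getD_eq_getElem _ _ hi] at hk⟩
    obtain rfl : X.length = n := by simpa using hxs
    exact (pAinv_map_of_countP_le ha (Nat.pos_of_mul_pos_left hb)
      (List.ne_nil_of_length_pos (by omega)) (List.countP_le_length_sub hX)).of_perm hperm

/-- for `y = (b, a^{n−1})` with `a ∣ b`, `x ∈ PAinv_n(y)` iff for all
`i ∈ [n]` the `i`-th smallest entry of `x` is of the form `1 + (k−1)a` with `k ∈ [i]`.
Here `xs` is the nondecreasing rearrangement of `x`, and indices are 0-based, so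
`xs.getD i 0` is the `(i+1)`-th smallest entry. -/
theorem stmt2 (n a b : ℕ) (hn : 2 ≤ n) (ha : 0 < a) (hb : 0 < b)
    (y : List ℕ) (hy : y = b :: List.replicate (n - 1) a)
    (x : List ℕ) (hxlen : x.length = n)
    (hxm : ∀ v ∈ x, 1 ≤ v ∧ v ≤ b + (n - 1) * a)
    (xs : List ℕ) (hperm : xs.Perm x) (hsort : xs.Pairwise (· ≤ ·))
    (hdvd : a ∣ b) :
    PAinv y x ↔
      ∀ i < n, ∃ k, 1 ≤ k ∧ k ≤ i + 1 ∧ xs.getD i 0 = 1 + (k - 1) * a :=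
  stmt2_general n a b hn ha hb y hy x hxlen xs hperm hsort hdvd
end

section
/- Let y = (b, a, a, ..., a) ∈ ℕ^n with n ≥ 2. If a divides b or b > (n−1)a, then the number of invariant parking assortments for y is |PAinv_n(y)| = (n+1)^{n−1}, and the number of nondecreasing invariant parking assortments for y is |PAinv↑_n(y)| = C_n = (1/(n+1))·binom(2n, n), the n-th Catalan number. -/
/-!
For `y = (b, a, …, a)` every entry `v` of an invariant assortment can be moved to the front: the
long car then parks exactly on `[v, v + b)` and the `n - 1` cars of length `a` must tile the rest
of the lot, in particular `[1, v)`, so `v = k a + 1`. Moving the cars that prefer a spot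
`≥ p a + 1` to the front, they must fit into `[p a + 1, m]`, so there are at most `n - p` of
them: the indices `k` form a parking function. Conversely, if `a ∣ b` or `b > (n - 1) a`, no
preference `k a + 1` falls strictly inside a free cell of the lot cut at the long car, and
Hall's condition lets the cars fill the free cells greedily, so every parking function parks in
every order. Hence `k ↦ k a + 1` maps parking functions bijectively onto invariant assortments.

Both counts then follow from Pollak's cycle lemma: among the `n + 1` cyclic shifts modulo `n + 1`
of an `n`-tuple, or of an `n`-multiset, exactly one is a parking function.
-/

theorem Park.of_append {m : ℕ} {occ : Finset ℕ} {l₁ l₂ : List (ℕ × ℕ)}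
    (h : Park m occ (l₁ ++ l₂)) : Park m occ l₁ := by
  induction l₁ generalizing occ with
  | nil => exact .nil occ
  | cons c l ih =>
    cases h with
    | cons _ _ _ _ s hs hrest => exact .cons _ _ _ _ s hs (ih hrest)

theorem FitsAt.Ico_subset {occ : Finset ℕ} {m pref len s : ℕ} (h : FitsAt occ m pref len s) :
    Finset.Ico s (s + len) ⊆ Finset.Ico pref (m + 1) \ occ := by
  obtain ⟨hpref, hm, hfree⟩ := h
  intro t ht
  have := Finset.mem_Ico.1 ht
  exact Finset.mem_sdiff.2 ⟨Finset.mem_Ico.2 ⟨by omega, by omega⟩, hfree t ht⟩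

theorem Park.sum_snd_le {m P : ℕ} {occ : Finset ℕ} {l : List (ℕ × ℕ)} (h : Park m occ l)
    (hP : ∀ c ∈ l, P ≤ c.1) : (l.map Prod.snd).sum ≤ (Finset.Ico P (m + 1) \ occ).card := by
  induction h with
  | nil => simp
  | cons occ pref len rest s hs _ ih =>
    have hsub : Finset.Ico s (s + len) ⊆ Finset.Ico P (m + 1) \ occ :=
      hs.1.Ico_subset.trans (Finset.sdiff_subset_sdiff
        (Finset.Ico_subset_Ico_left (hP _ List.mem_cons_self)) le_rfl)
    have ih := ih fun c hc => hP c (List.mem_cons_of_mem _ hc)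
    rw [← Finset.sup_eq_union, ← sdiff_sdiff_left, Finset.card_sdiff_of_subset hsub,
      Nat.card_Ico] at ih
    have := Finset.card_le_card hsub
    simp only [Nat.card_Ico, add_tsub_cancel_left] at this
    simp only [List.map_cons, List.sum_cons]
    omega

theorem PAinv.sum_take_countP_le {y x : List ℕ} (hx : PAinv y x) (P : ℕ) :
    (y.take (x.countP (P ≤ ·))).sum ≤ y.sum + 1 - P := by
  have hf : (x.filter (P ≤ ·)).length = (y.take (x.countP (P ≤ ·))).length := by
    rw [← List.countP_eq_length_filter, List.length_take, ← (hx x (.refl x)).1]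
    exact (min_eq_left List.countP_le_length).symm
  obtain ⟨-, -, hpark⟩ := hx _ (List.filter_append_perm (P ≤ ·) x).symm
  rw [← List.take_append_drop (x.countP (P ≤ ·)) y, List.zip_append hf] at hpark
  have := hpark.of_append.sum_snd_le (P := P) fun c hc => by
    simpa using (List.mem_filter.1 (List.of_mem_zip hc).1).2
  rwa [List.map_snd_zip hf.ge, Finset.sdiff_empty, Nat.card_Ico,
    List.take_append_drop] at this

theorem dvd_card_filter_Ico_lt {s a v : ℕ} (hv : v ∉ Finset.Ico s (s + a)) :
    a ∣ ((Finset.Ico s (s + a)).filter (· < v)).card := by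
  rw [Finset.mem_Ico, not_and_or, not_le, not_lt] at hv
  rcases hv with hv | hv
  · rw [Finset.filter_false_of_mem fun t ht => by simp at ht; omega]
    exact dvd_zero a
  · rw [Finset.filter_true_of_mem fun t ht => by simp at ht; omega, Nat.card_Ico,
      add_tsub_cancel_left]

/-- Cars of length `a` never straddle an occupied spot `v`, so each adds `0` or `a` spots below
`v`. -/
theorem Park.exists_final_occupancy {m a : ℕ} {occ : Finset ℕ} {l : List (ℕ × ℕ)}
    (h : Park m occ l) (hl : ∀ c ∈ l, 1 ≤ c.1 ∧ c.2 = a) :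
    ∃ occ', occ ⊆ occ' ∧ occ' \ occ ⊆ Finset.Icc 1 m ∧
      occ'.card = occ.card + (l.map Prod.snd).sum ∧
      ∀ v ∈ occ, a ∣ ((occ' \ occ).filter (· < v)).card := by
  induction h with
  | nil occ => exact ⟨occ, subset_rfl, by simp, by simp, fun v _ => by simp⟩
  | cons occ pref len rest s hs _ ih =>
    obtain ⟨hpref, hlen⟩ := hl _ List.mem_cons_self
    obtain ⟨occ', hsub, hnew, hcard, hdvd⟩ := ih fun c hc => hl c (List.mem_cons_of_mem _ hc)
    set I := Finset.Ico s (s + len)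
    have hI : I ⊆ Finset.Ico pref (m + 1) \ occ := hs.1.Ico_subset
    have hdisj : Disjoint occ I :=
      Finset.disjoint_right.2 fun t ht => (Finset.mem_sdiff.1 (hI ht)).2
    have hsplit : occ' \ occ = occ' \ (occ ∪ I) ∪ I := by
      ext t
      have hIocc' : t ∈ I → t ∈ occ' := fun ht => hsub (Finset.mem_union_right occ ht)
      have hIocc : t ∈ I → t ∉ occ := fun ht => Finset.disjoint_right.1 hdisj ht
      simp only [Finset.mem_sdiff, Finset.mem_union]
      tauto
    refine ⟨occ', Finset.subset_union_left.trans hsub, ?_, ?_, fun v hv => ?_⟩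
    · refine hsplit ▸ Finset.union_subset hnew fun t ht => ?_
      have := Finset.mem_Ico.1 (Finset.mem_sdiff.1 (hI ht)).1
      simp only at hpref
      exact Finset.mem_Icc.2 ⟨by omega, by omega⟩
    · rw [hcard, Finset.card_union_of_disjoint hdisj, Nat.card_Ico, List.map_cons, List.sum_cons]
      omega
    · rw [hsplit, Finset.filter_union, Finset.card_union_of_disjoint (Finset.disjoint_filter_filter
        (Finset.sdiff_disjoint.mono_right Finset.subset_union_right))]
      refine dvd_add (hdvd v (Finset.mem_union_left _ hv)) ?_
      simp only at hlen
      exact hlen ▸ dvd_card_filter_Ico_lt (Finset.disjoint_left.1 hdisj hv)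

theorem Park.dvd_sub_one_of_cons {m a b v : ℕ} {l : List (ℕ × ℕ)} (hb : 0 < b) (hv : 1 ≤ v)
    (h : Park m ∅ ((v, b) :: l)) (hl : ∀ c ∈ l, 1 ≤ c.1 ∧ c.2 = a)
    (hm : b + (l.map Prod.snd).sum = m) : a ∣ v - 1 := by
  obtain _ | ⟨_, _, _, _, s, ⟨⟨hvs, hsm, -⟩, hmin⟩, hrest⟩ := h
  obtain rfl : s = v := by
    by_contra hne
    exact hmin v (by omega) ⟨le_rfl, by omega, by simp⟩
  obtain ⟨occ', hsub, hnew, hcard, hdvd⟩ := hrest.exists_final_occupancy hl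
  rw [Finset.empty_union] at hsub hnew hcard hdvd
  have hfull : occ' = Finset.Icc 1 m := by
    refine Finset.eq_of_subset_of_card_le (fun t ht => ?_) (by simp [hcard]; omega)
    by_cases hts : t ∈ Finset.Ico s (s + b)
    · simp at hts ⊢; omega
    · exact hnew (Finset.mem_sdiff.2 ⟨ht, hts⟩)
  have hleft : (occ' \ Finset.Ico s (s + b)).filter (· < s) = Finset.Ico 1 s := by
    ext t; simp [hfull]; omega
  simpa [hleft] using hdvd s (by simp; omega)

theorem Monotone.disjoint_Ico_succ {c : ℕ → ℕ} (hc : Monotone c) {i j : ℕ} (hij : i ≠ j) :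
    Disjoint (Finset.Ico (c i) (c (i + 1))) (Finset.Ico (c j) (c (j + 1))) := by
  simpa [← Finset.coe_Ico, Finset.disjoint_coe] using hc.pairwise_disjoint_on_Ico_succ hij

theorem exists_mem_Ico_succ (c : ℕ → ℕ) {t : ℕ} (h₀ : c 0 ≤ t) :
    ∀ {N : ℕ}, t < c N → ∃ i < N, t ∈ Finset.Ico (c i) (c (i + 1))
  | 0, h => absurd h (not_lt.2 h₀)
  | N + 1, h => by
    by_cases hN : t < c N
    · obtain ⟨i, hi, hit⟩ := exists_mem_Ico_succ c h₀ hN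
      exact ⟨i, by omega, hit⟩
    · exact ⟨N, by omega, Finset.mem_Ico.2 ⟨not_lt.1 hN, h⟩⟩

/-- Hall's condition for sending the cars with preferences `L` to the free cells `S` survives
when the first car takes the first free cell `j₀` beyond its preference. -/
theorem hall_erase_min {c : ℕ → ℕ} (hc : Monotone c) {S : Finset ℕ} {π j₀ : ℕ} {L : List ℕ}
    (hj₀ : j₀ ∈ S) (hmin : ∀ j ∈ S, π ≤ c j → j₀ ≤ j)
    (hall : ∀ π' ∈ π :: L, (π :: L).countP (π' ≤ ·) ≤ (S.filter (π' ≤ c ·)).card) :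
    ∀ π' ∈ L, L.countP (π' ≤ ·) ≤ ((S.erase j₀).filter (π' ≤ c ·)).card := by
  intro π' hπ'
  have hcons := hall π' (List.mem_cons_of_mem _ hπ')
  rw [List.countP_cons] at hcons
  rw [Finset.filter_erase]
  by_cases hj : π' ≤ c j₀
  · rw [Finset.card_erase_of_mem (Finset.mem_filter.2 ⟨hj₀, hj⟩)]
    by_cases hle : π' ≤ π
    · simp only [hle, decide_true, if_true] at hcons
      omega
    · have hF : S.filter (π' ≤ c ·) = S.filter (π ≤ c ·) := Finset.filter_congr
        fun j hjS => ⟨fun h => by omega, fun h => hj.trans (hc (hmin j hjS h))⟩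
      have hπcons := hall π List.mem_cons_self
      rw [List.countP_cons, ← hF] at hπcons
      have : L.countP (π' ≤ ·) ≤ L.countP (π ≤ ·) :=
        List.countP_mono_left fun x _ h => by simp at h ⊢; omega
      simp at hπcons
      omega
  · rw [Finset.erase_eq_of_notMem (by simp [hj])]
    split_ifs at hcons <;> omega

theorem parksAt_first_free_cell {m a n π j₀ : ℕ} {c : ℕ → ℕ} {occ S : Finset ℕ} (ha : 0 < a)
    (hc : Monotone c) (hcn : c n ≤ m + 1)
    (hS : ∀ j ∈ S, j < n ∧ c (j + 1) = c j + a ∧ Disjoint occ (Finset.Ico (c j) (c (j + 1))))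
    (hocc : ∀ j < n, j ∉ S → Finset.Ico (c j) (c (j + 1)) ⊆ occ)
    (hπ : c 0 ≤ π ∧ ∀ j ∈ S, c j < π → c (j + 1) ≤ π)
    (hj₀ : j₀ ∈ S) (hπj₀ : π ≤ c j₀) (hmin : ∀ j ∈ S, π ≤ c j → j₀ ≤ j) :
    ParksAt occ m π a (c j₀) := by
  obtain ⟨hj₀n, hsize, hdisj⟩ := hS j₀ hj₀
  refine ⟨⟨hπj₀, hsize ▸ (hc hj₀n).trans hcn,
    fun t ht => Finset.disjoint_right.1 hdisj (hsize ▸ ht)⟩, ?_⟩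
  rintro s' hs' ⟨hπs', -, hfree⟩
  obtain ⟨i, hi, hit⟩ := exists_mem_Ico_succ c (hπ.1.trans hπs') hs'
  have hit' := Finset.mem_Ico.1 hit
  by_cases hiS : i ∈ S
  · by_cases hπi : π ≤ c i
    · exact absurd (hmin i hiS hπi) (by omega)
    · have := hπ.2 i hiS (by omega)
      omega
  · exact hfree s' (Finset.mem_Ico.2 ⟨le_rfl, by omega⟩) (hocc i (by omega) hiS hit)

/-- The lot `[1, m]` is cut into cells `[c j, c (j + 1))`, `j < n`, of which `S` are free. If
the free cells have length `a` and no preference falls strictly inside one of them, then under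
Hall's condition each car parks at the start of the first free cell beyond its preference. -/
theorem park_of_cells {m a n : ℕ} {c : ℕ → ℕ} (ha : 0 < a) (hc : Monotone c) (hcn : c n ≤ m + 1)
    (L : List ℕ) (occ S : Finset ℕ)
    (hS : ∀ j ∈ S, j < n ∧ c (j + 1) = c j + a ∧ Disjoint occ (Finset.Ico (c j) (c (j + 1))))
    (hocc : ∀ j < n, j ∉ S → Finset.Ico (c j) (c (j + 1)) ⊆ occ)
    (hL : ∀ π ∈ L, c 0 ≤ π ∧ ∀ j ∈ S, c j < π → c (j + 1) ≤ π)
    (hall : ∀ π ∈ L, L.countP (π ≤ ·) ≤ (S.filter (π ≤ c ·)).card) :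
    Park m occ (L.map (·, a)) := by
  induction L generalizing occ S with
  | nil => exact .nil occ
  | cons π L ih =>
    have hne : (S.filter (π ≤ c ·)).Nonempty := by
      have := hall π List.mem_cons_self
      rw [List.countP_cons] at this
      exact Finset.card_pos.1 (by simp at this; omega)
    set j₀ := (S.filter (π ≤ c ·)).min' hne
    obtain ⟨hj₀S, hπj₀⟩ := Finset.mem_filter.1 ((S.filter (π ≤ c ·)).min'_mem hne)
    have hmin : ∀ j ∈ S, π ≤ c j → j₀ ≤ j := fun j hj hπj =>
      Finset.min'_le _ _ (Finset.mem_filter.2 ⟨hj, hπj⟩)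
    refine .cons _ _ _ _ (c j₀)
      (parksAt_first_free_cell ha hc hcn hS hocc (hL π List.mem_cons_self) hj₀S hπj₀ hmin) ?_
    rw [← (hS j₀ hj₀S).2.1]
    refine ih _ (S.erase j₀) (fun j hj => ?_) (fun j hj hjS => ?_)
      (fun π' hπ' => ?_) (hall_erase_min hc hj₀S hmin hall)
    · obtain ⟨hjj₀, hjS⟩ := Finset.mem_erase.1 hj
      obtain ⟨hjn, hjsize, hjdisj⟩ := hS j hjS
      exact ⟨hjn, hjsize,
        Finset.disjoint_union_left.2 ⟨hjdisj, hc.disjoint_Ico_succ hjj₀.symm⟩⟩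
    · by_cases hjj₀ : j = j₀
      · exact hjj₀ ▸ Finset.subset_union_right
      · exact (hocc j hj fun h => hjS (Finset.mem_erase.2 ⟨hjj₀, h⟩)).trans
          Finset.subset_union_left
    · obtain ⟨h₀, hcell⟩ := hL π' (List.mem_cons_of_mem _ hπ')
      exact ⟨h₀, fun j hj => hcell j (Finset.mem_of_mem_erase hj)⟩

/-- Parking functions with values in `{0, …, n - 1}`, recorded by their multiset of values. -/
def IsParking (n : ℕ) (s : Multiset ℕ) : Prop :=
  Multiset.card s = n ∧ ∀ k ≤ n, k ≤ s.countP (· < k)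

namespace IsParking

variable {n : ℕ} {s : Multiset ℕ}

theorem countP_le (h : IsParking n s) (p : ℕ) : s.countP (p ≤ ·) ≤ n - p := by
  have hsplit (k : ℕ) : s.countP (k ≤ ·) + s.countP (· < k) = n := by
    simpa [h.1, not_le] using (Multiset.card_eq_countP_add_countP (k ≤ ·) s).symm
  rcases le_total p n with hp | hp
  · have := h.2 p hp
    have := hsplit p
    omega
  · have := h.2 n le_rfl
    have := hsplit n
    have : s.countP (p ≤ ·) ≤ s.countP (n ≤ ·) := by
      simp only [Multiset.countP_eq_card_filter]
      exact Multiset.card_le_card (Multiset.monotone_filter_right s fun _ hv => hp.trans hv)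
    omega

theorem lt (h : IsParking n s) {v : ℕ} (hv : v ∈ s) : v < n := by
  by_contra hnv
  have := h.countP_le n
  rw [Nat.sub_self, Nat.le_zero, Multiset.countP_eq_zero] at this
  exact this v hv (not_lt.1 hnv)

theorem of_countP_le (hs : Multiset.card s = n) (h : ∀ p, s.countP (p ≤ ·) ≤ n - p) :
    IsParking n s := by
  refine ⟨hs, fun k hk => ?_⟩
  have := h k
  have := Multiset.card_eq_countP_add_countP (k ≤ ·) s
  simp only [not_le] at this
  omega

end IsParking

/-- Start of cell `j` when the long car occupies cell `u` and every other cell has length `a`. -/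
def cellStart (a b u j : ℕ) : ℕ :=
  if j ≤ u then j * a + 1 else (j - 1) * a + b + 1

namespace cellStart

variable {a b u : ℕ}

theorem succ (j : ℕ) :
    cellStart a b u (j + 1) = cellStart a b u j + if j = u then b else a := by
  unfold cellStart
  rcases lt_trichotomy j u with h | rfl | h
  · simp only [if_pos (show j + 1 ≤ u by omega), if_pos h.le, if_neg h.ne]; ring
  · simp; ring
  · simp only [if_neg (show ¬j + 1 ≤ u by omega), if_neg (show ¬j ≤ u by omega), if_neg h.ne',
      add_tsub_cancel_right]
    obtain ⟨i, rfl⟩ : ∃ i, j = i + 1 := ⟨j - 1, by omega⟩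
    simp only [add_tsub_cancel_right]; ring

theorem monotone : Monotone (cellStart a b u) :=
  monotone_nat_of_le_succ fun j => by rw [succ]; omega

theorem zero : cellStart a b u 0 = 1 := by simp [cellStart]

theorem of_le {j : ℕ} (h : j ≤ u) : cellStart a b u j = j * a + 1 := if_pos h

theorem of_lt {j : ℕ} (h : u < j) : cellStart a b u j = (j - 1) * a + b + 1 :=
  if_neg (not_le.2 h)

theorem ge (hab : a ≤ b) (j : ℕ) : j * a + 1 ≤ cellStart a b u j := by
  rcases le_or_gt j u with h | h
  · rw [of_le h]
  · rw [of_lt h]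
    obtain ⟨i, rfl⟩ : ∃ i, j = i + 1 := ⟨j - 1, by omega⟩
    simp only [add_tsub_cancel_right, add_mul, one_mul]
    omega

/-- If `a ∣ b` every cell starts at a spot `≡ 1 [MOD a]`; if `n a < b` the cells after the long
car lie beyond every preference `k a + 1`, `k ≤ n`. -/
theorem add_le_of_lt {n k j : ℕ} (hdiv : a ∣ b ∨ n * a < b) (hk : k ≤ n) (hj : j ≠ u)
    (h : cellStart a b u j < k * a + 1) : cellStart a b u j + a ≤ k * a + 1 := by
  have key (i : ℕ) (hi : i * a + 1 < k * a + 1) : i * a + 1 + a ≤ k * a + 1 := by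
    have : (i + 1) * a ≤ k * a :=
      Nat.mul_le_mul_right a (Nat.lt_of_mul_lt_mul_right (Nat.lt_of_add_lt_add_right hi))
    rw [add_one_mul] at this
    omega
  rcases lt_or_gt_of_ne hj with hj | hj
  · rw [of_le hj.le] at h ⊢
    exact key j h
  · rw [of_lt hj] at h ⊢
    rcases hdiv with ⟨q, rfl⟩ | hb
    · have hq : (j - 1) * a + a * q = (j - 1 + q) * a := by ring
      rw [hq] at h ⊢
      exact key _ h
    · have := Nat.mul_le_mul_right a hk
      omega

end cellStart

theorem countP_map_mul_add_one {a : ℕ} (ha : 0 < a) (w : List ℕ) (p : ℕ) :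
    (w.map (· * a + 1)).countP (p * a + 1 ≤ ·) = w.countP (p ≤ ·) := by
  rw [List.countP_map]
  exact List.countP_congr fun k _ => by simp [Nat.mul_le_mul_right_iff ha]

theorem List.zip_replicate_length_s5 {α β : Type*} (l : List α) (c : β) :
    l.zip (List.replicate l.length c) = l.map (·, c) := by
  rw [← List.map_const', ← List.map_prod_left_eq_zip]

theorem List.eq_map_mul_add_one_of_dvd {a : ℕ} {x : List ℕ} (hx : ∀ v ∈ x, 1 ≤ v ∧ a ∣ v - 1) :
    x = (x.map fun v => (v - 1) / a).map (· * a + 1) := by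
  rw [List.map_map]
  refine ((List.map_congr_left fun v hv => ?_).trans (List.map_id x)).symm
  have := (hx v hv).1
  simp [Nat.div_mul_cancel (hx v hv).2]
  omega

theorem IsParking.countP_tail_le_card_cells {n a b u : ℕ} (hab : a ≤ b) {w : List ℕ}
    (hw : IsParking (n + 1) ↑(u :: w)) (k : ℕ) :
    w.countP (k ≤ ·) ≤
      (((Finset.range (n + 1)).erase u).filter (k * a + 1 ≤ cellStart a b u ·)).card := by
  have hu : u < n + 1 := hw.lt (Multiset.mem_coe.2 List.mem_cons_self)
  have hcount := hw.countP_le k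
  rw [Multiset.coe_countP, List.countP_cons] at hcount
  have hsub : ((Finset.range (n + 1)).filter (k ≤ ·)).erase u ⊆
      ((Finset.range (n + 1)).erase u).filter (k * a + 1 ≤ cellStart a b u ·) := by
    rw [← Finset.filter_erase]
    exact Finset.monotone_filter_right _ fun j _ hj =>
      (Nat.add_le_add_right (Nat.mul_le_mul_right a hj) 1).trans (cellStart.ge hab j)
  refine le_trans ?_ (Finset.card_le_card hsub)
  have hIco : (Finset.range (n + 1)).filter (k ≤ ·) = Finset.Ico k (n + 1) := by
    ext j; simp; omega
  rw [hIco]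
  by_cases hku : k ≤ u
  · rw [Finset.card_erase_of_mem (Finset.mem_Ico.2 ⟨hku, hu⟩), Nat.card_Ico]
    simp [hku] at hcount
    omega
  · rw [Finset.erase_eq_of_notMem (by simp; omega), Nat.card_Ico]
    simp [hku] at hcount
    omega

theorem park_tail_of_isParking {n a b u : ℕ} (ha : 0 < a) (hab : a ≤ b)
    (hdiv : a ∣ b ∨ n * a < b) {w : List ℕ} (hw : IsParking (n + 1) ↑(u :: w)) :
    Park (b + n * a) (Finset.Ico (cellStart a b u u) (cellStart a b u (u + 1)))
      ((w.map (· * a + 1)).map (·, a)) := by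
  have hlt : ∀ k ∈ u :: w, k ≤ n := fun k hk => Nat.lt_succ_iff.1 (hw.lt (Multiset.mem_coe.2 hk))
  refine park_of_cells (m := b + n * a) (n := n + 1) (c := cellStart a b u) ha
    cellStart.monotone
    (by rw [cellStart.of_lt (Nat.lt_succ_of_le (hlt u List.mem_cons_self))]; simp; omega) _ _
    ((Finset.range (n + 1)).erase u) (fun j hj => ?_) (fun j hj hjS => ?_) (fun π hπ => ?_)
    (fun π hπ => ?_)
  · obtain ⟨hju, hjn⟩ := Finset.mem_erase.1 hj
    exact ⟨Finset.mem_range.1 hjn, by rw [cellStart.succ, if_neg hju],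
      cellStart.monotone.disjoint_Ico_succ (Ne.symm hju)⟩
  · obtain rfl : j = u := by simpa [hj] using hjS
    exact subset_rfl
  · obtain ⟨k, hk, rfl⟩ := List.mem_map.1 hπ
    refine ⟨by rw [cellStart.zero]; omega, fun j hj hjk => ?_⟩
    rw [cellStart.succ, if_neg (Finset.mem_erase.1 hj).1]
    exact cellStart.add_le_of_lt hdiv (hlt k (List.mem_cons_of_mem _ hk))
      (Finset.mem_erase.1 hj).1 hjk
  · obtain ⟨k, -, rfl⟩ := List.mem_map.1 hπ
    rw [countP_map_mul_add_one ha]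
    exact hw.countP_tail_le_card_cells hab k

theorem PA_of_isParking {n a b : ℕ} (ha : 0 < a) (hb : 0 < b) (hab : a ≤ b)
    (hdiv : a ∣ b ∨ n * a < b) {w : List ℕ} (hw : IsParking (n + 1) w) :
    PA (b :: List.replicate n a) (w.map (· * a + 1)) := by
  obtain ⟨u, w, rfl⟩ : ∃ u w', w = u :: w' := by
    cases w with
    | nil => exact absurd hw.1 (by simp)
    | cons u w => exact ⟨u, w, rfl⟩
  have hlt : ∀ k ∈ u :: w, k ≤ n := fun k hk => Nat.lt_succ_iff.1 (hw.lt (Multiset.mem_coe.2 hk))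
  have hlen : w.length = n := by simpa using hw.1
  have hsum : (b :: List.replicate n a).sum = b + n * a := by simp [List.sum_replicate]
  refine ⟨by simp [hlen], fun v hv => ?_, ?_⟩
  · obtain ⟨k, hk, rfl⟩ := List.mem_map.1 hv
    have := Nat.mul_le_mul_right a (hlt k hk)
    rw [hsum]
    omega
  have hzip : (w.map (· * a + 1)).zip (List.replicate n a) = (w.map (· * a + 1)).map (·, a) := by
    rw [← List.zip_replicate_length_s5, List.length_map, hlen]
  have hum := Nat.mul_le_mul_right a (hlt u List.mem_cons_self)
  rw [hsum, List.map_cons, List.zip_cons_cons, hzip]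
  refine .cons _ _ _ _ (u * a + 1) ⟨⟨le_rfl, by omega, by simp⟩, fun s' hs' h => by
    have := h.1
    omega⟩ ?_
  have hcell : Finset.Ico (u * a + 1) (u * a + 1 + b) =
      Finset.Ico (cellStart a b u u) (cellStart a b u (u + 1)) := by
    rw [cellStart.succ, cellStart.of_le le_rfl, if_pos rfl]
  rw [Finset.empty_union, hcell]
  exact park_tail_of_isParking ha hab hdiv hw

namespace PAinv

variable {n a b : ℕ} {x : List ℕ}

theorem countP_le (ha : 0 < a) (hb : 0 < b) (hx : PAinv (b :: List.replicate n a) x) (p : ℕ) :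
    x.countP (p * a + 1 ≤ ·) ≤ n + 1 - p := by
  have hsum := hx.sum_take_countP_le (p * a + 1)
  have hlen : x.countP (p * a + 1 ≤ ·) ≤ n + 1 := by
    simpa [(hx x (.refl x)).1] using List.countP_le_length (l := x)
  rcases hf : x.countP (p * a + 1 ≤ ·) with _ | f
  · exact Nat.zero_le _
  rw [hf] at hsum hlen
  simp only [List.take_succ_cons, List.take_replicate, List.sum_cons, List.sum_replicate,
    smul_eq_mul, min_eq_left (Nat.le_of_succ_le_succ hlen)] at hsum
  have : (f + p) * a ≤ n * a := by rw [add_mul]; omega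
  have := Nat.le_of_mul_le_mul_right this ha
  omega

theorem dvd_sub_one (hb : 0 < b) (hx : PAinv (b :: List.replicate n a) x) {v : ℕ} (hv : v ∈ x) :
    a ∣ v - 1 := by
  obtain ⟨hlen, hbound, hpark⟩ := hx _ (List.perm_cons_erase hv)
  have hlen' : (x.erase v).length = n := by simpa using hlen
  rw [List.zip_cons_cons] at hpark
  refine hpark.dvd_sub_one_of_cons hb (hbound v List.mem_cons_self).1 (fun c hc => ?_) ?_
  · obtain ⟨hc₁, hc₂⟩ := List.of_mem_zip hc
    exact ⟨(hbound _ (List.mem_cons_of_mem _ hc₁)).1, List.eq_of_mem_replicate hc₂⟩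
  · rw [List.map_snd_zip (by simp [hlen'])]
    simp [List.sum_replicate]

end PAinv

theorem PAinv_iff_exists_isParking {n a b : ℕ} (ha : 0 < a) (hb : 0 < b) (hab : a ≤ b)
    (hdiv : a ∣ b ∨ n * a < b) {x : List ℕ} :
    PAinv (b :: List.replicate n a) x ↔
      ∃ w : List ℕ, IsParking (n + 1) w ∧ x = w.map (· * a + 1) := by
  constructor
  · intro hx
    obtain ⟨hlen, hbound, -⟩ := hx x (.refl x)
    have hx' := List.eq_map_mul_add_one_of_dvd fun v hv =>
      ⟨(hbound v hv).1, hx.dvd_sub_one hb hv⟩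
    refine ⟨_, IsParking.of_countP_le (by simpa using hlen) fun p => ?_, hx'⟩
    rw [Multiset.coe_countP, ← countP_map_mul_add_one ha, ← hx']
    exact hx.countP_le ha hb p
  · rintro ⟨w, hw, rfl⟩ x' hperm
    have hx' := List.eq_map_mul_add_one_of_dvd (a := a) (x := x') fun v hv => by
      obtain ⟨k, -, rfl⟩ := List.mem_map.1 (hperm.mem_iff.2 hv)
      simp
    have hperm' : (x'.map fun v => (v - 1) / a).Perm w := by
      simpa [List.map_map, Function.comp_def, Nat.mul_div_cancel _ ha] using
        (hperm.map fun v => (v - 1) / a).symm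
    rw [hx']
    exact PA_of_isParking ha hb hab hdiv (Multiset.coe_eq_coe.2 hperm' ▸ hw)

theorem existsUnique_lt_forall_le_add {N : ℕ} (hN : 0 < N) {F : ℕ → ℤ}
    (hF : ∀ m, F (m + N) = F m - 1) : ∃! e, e < N ∧ ∀ k < N, F e ≤ F (e + k) := by
  have hex : ∃ e, e < N ∧ ∀ j < N, F e ≤ F j := by
    obtain ⟨e, he, hmin⟩ := (Finset.range N).exists_min_image F ⟨0, Finset.mem_range.2 hN⟩
    exact ⟨e, Finset.mem_range.1 he, fun j hj => hmin j (Finset.mem_range.2 hj)⟩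
  set e₀ := Nat.find hex
  obtain ⟨he₀, hmin⟩ : e₀ < N ∧ ∀ j < N, F e₀ ≤ F j := Nat.find_spec hex
  -- `e₀` is the first minimum on `[0, N)`, so the values before it are strictly larger.
  have hgood₀ : ∀ k < N, F e₀ ≤ F (e₀ + k) := fun k hk => by
    by_cases hkN : e₀ + k < N
    · exact hmin _ hkN
    · have := Nat.find_min hex (m := e₀ + k - N) (by omega)
      simp only [not_and, not_forall, not_le] at this
      obtain ⟨j, hjN, hj⟩ := this (by omega)
      have := hmin j hjN
      rw [show e₀ + k = e₀ + k - N + N by omega, hF]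
      omega
  have hnot_both : ∀ e₁ e₂, e₁ < e₂ → e₂ < N → (∀ k < N, F e₁ ≤ F (e₁ + k)) →
      ¬ ∀ k < N, F e₂ ≤ F (e₂ + k) := fun e₁ e₂ h₁₂ h₂ hgood₁ hgood₂ => by
    have h₁ := hgood₁ (e₂ - e₁) (by omega)
    have h₂ := hgood₂ (e₁ + N - e₂) (by omega)
    rw [show e₁ + (e₂ - e₁) = e₂ by omega] at h₁
    rw [show e₂ + (e₁ + N - e₂) = e₁ + N by omega, hF] at h₂
    omega
  refine ⟨e₀, ⟨he₀, hgood₀⟩, fun e ⟨heN, hgood⟩ => ?_⟩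
  by_contra hne
  rcases lt_or_gt_of_ne hne with h | h
  · exact hnot_both e e₀ h he₀ hgood hgood₀
  · exact hnot_both e₀ e h heN hgood₀ hgood

theorem Multiset.countP_lt_succ {α : Type*} (f : α → ℕ) (s : Multiset α) (k : ℕ) :
    s.countP (f · < k + 1) = s.countP (f · < k) + s.countP (f · = k) := by
  induction s using Multiset.induction_on with
  | empty => simp
  | cons x s ih =>
    simp only [Multiset.countP_cons, ih]
    split_ifs <;> omega

section Pollak

variable {n : ℕ}

def prefixCount (q : Multiset (ZMod (n + 1))) (m : ℕ) : ℕ :=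
  ∑ j ∈ Finset.range m, q.count (j : ZMod (n + 1))

theorem prefixCount_add_period (q : Multiset (ZMod (n + 1))) (m : ℕ) :
    prefixCount q (m + (n + 1)) = prefixCount q m + Multiset.card q := by
  have hperiod : ∑ j ∈ Finset.range (n + 1), q.count (j : ZMod (n + 1)) = Multiset.card q := by
    rw [← Multiset.sum_count_eq_card (s := Finset.univ) fun _ _ => Finset.mem_univ _,
      ← Fin.sum_univ_eq_sum_range]
    exact Finset.sum_congr rfl fun i _ =>
      congrArg (q.count ·) (ZMod.natCast_zmod_val (n := n + 1) i)
  have hshift (x : ℕ) : ((n + 1 + x : ℕ) : ZMod (n + 1)) = x := by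
    rw [Nat.cast_add, ZMod.natCast_self, zero_add]
  simp only [prefixCount, add_comm m, Finset.sum_range_add, hperiod, hshift]
  ring

theorem countP_val_add_lt (q : Multiset (ZMod (n + 1))) (c : ZMod (n + 1)) {k : ℕ}
    (hk : k ≤ n + 1) :
    q.countP (fun r => (c + r).val < k) + prefixCount q (-c).val =
      prefixCount q ((-c).val + k) := by
  induction k with
  | zero => simp
  | succ k ih =>
    have hval : q.countP (fun r => (c + r).val = k) =
        q.count (((-c).val + k : ℕ) : ZMod (n + 1)) := by
      refine Multiset.countP_congr rfl fun r _ => ?_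
      rw [Nat.cast_add, ZMod.natCast_zmod_val, eq_iff_iff]
      constructor
      · rintro h
        rw [← h, ZMod.natCast_zmod_val]
        ring
      · rintro rfl
        rw [add_neg_cancel_left, ZMod.val_cast_of_lt (by omega)]
    have hsucc : prefixCount q ((-c).val + (k + 1)) =
        prefixCount q ((-c).val + k) + q.count (((-c).val + k : ℕ) : ZMod (n + 1)) :=
      Finset.sum_range_succ _ _
    rw [Multiset.countP_lt_succ (fun r => (c + r).val), hval, hsucc, ← ih (by omega)]
    ring

/-- Pollak's cycle lemma. -/
theorem existsUnique_isParking_map_add (q : Multiset (ZMod (n + 1)))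
    (hq : Multiset.card q = n) :
    ∃! c : ZMod (n + 1), IsParking n (q.map fun r => (c + r).val) := by
  set F : ℕ → ℤ := fun m => prefixCount q m - m
  have hF (m : ℕ) : F (m + (n + 1)) = F m - 1 := by
    simp only [F, prefixCount_add_period, hq]
    push_cast
    ring
  have hkey (c : ZMod (n + 1)) : IsParking n (q.map fun r => (c + r).val) ↔
      ∀ k < n + 1, F (-c).val ≤ F ((-c).val + k) := by
    simp only [IsParking, Multiset.card_map, hq, true_and, Multiset.countP_map,
      ← Multiset.countP_eq_card_filter, Nat.lt_succ_iff]
    refine forall_congr' fun k => imp_congr_right fun hk => ?_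
    have := countP_val_add_lt q c (k := k) (by omega)
    simp only [F]
    push_cast
    omega
  obtain ⟨e, ⟨he, hgood⟩, huniq⟩ := existsUnique_lt_forall_le_add (Nat.succ_pos n) hF
  refine ⟨-(e : ZMod (n + 1)), (hkey _).2 ?_, fun c hc => ?_⟩
  · rwa [neg_neg, ZMod.val_cast_of_lt he]
  · rw [← huniq _ ⟨ZMod.val_lt _, (hkey c).1 hc⟩, ZMod.natCast_zmod_val, neg_neg]

end Pollak

theorem Nat.card_subtype_mul_card_eq_of_existsUnique_vadd {G X : Type*} [AddGroup G]
    [AddAction G X] (P : X → Prop) (h : ∀ x, ∃! g : G, P (g +ᵥ x)) :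
    Nat.card {x // P x} * Nat.card G = Nat.card X := by
  rw [← Nat.card_prod]
  refine Nat.card_congr
    { toFun := fun p => p.2 +ᵥ p.1.1
      invFun := fun x => (⟨(h x).choose +ᵥ x, (h x).choose_spec.1⟩, -(h x).choose)
      left_inv := fun ⟨⟨x, hx⟩, g⟩ => ?_
      right_inv := fun x => by simp }
  have : (h (g +ᵥ x)).choose = -g := ((h _).choose_spec.2 (-g) (by simpa using hx)).symm
  simp [this]

instance Sym.instAddAction {G α : Type*} [AddMonoid G] [AddAction G α] (n : ℕ) :
    AddAction G (Sym α n) where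
  vadd g s := s.map (g +ᵥ ·)
  zero_vadd s := by
    change s.map ((0 : G) +ᵥ ·) = s
    simp
  add_vadd g g' s := by
    change s.map ((g + g') +ᵥ ·) = (s.map (g' +ᵥ ·)).map (g +ᵥ ·)
    simp [Sym.map_map, add_vadd]

theorem Sym.coe_vadd {G α : Type*} [AddMonoid G] [AddAction G α] {n : ℕ} (g : G)
    (s : Sym α n) : ((g +ᵥ s : Sym α n) : Multiset α) = (s : Multiset α).map (g +ᵥ ·) :=
  Sym.coe_map s _

theorem card_isParking_fun_mul (n : ℕ) :
    Nat.card {g : Fin n → ZMod (n + 1) // IsParking n (Finset.univ.val.map fun i => (g i).val)} *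
      (n + 1) = (n + 1) ^ n := by
  have := Nat.card_subtype_mul_card_eq_of_existsUnique_vadd (G := ZMod (n + 1))
    (fun g : Fin n → ZMod (n + 1) => IsParking n (Finset.univ.val.map fun i => (g i).val))
    fun g => by
      simpa [Multiset.map_map, Function.comp_def] using
        existsUnique_isParking_map_add (Finset.univ.val.map g) (by simp)
  rwa [Nat.card_zmod, Nat.card_fun, Nat.card_zmod, Nat.card_fin] at this

theorem card_isParking_sym_mul (n : ℕ) :
    Nat.card {q : Sym (ZMod (n + 1)) n //
      IsParking n ((q : Multiset (ZMod (n + 1))).map ZMod.val)} * (n + 1) = n.centralBinom := by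
  have := Nat.card_subtype_mul_card_eq_of_existsUnique_vadd (G := ZMod (n + 1))
    (fun q : Sym (ZMod (n + 1)) n => IsParking n ((q : Multiset (ZMod (n + 1))).map ZMod.val))
    fun q => by
      simpa [Sym.coe_vadd, Multiset.map_map, Function.comp_def] using
        existsUnique_isParking_map_add (q : Multiset (ZMod (n + 1))) q.2
  rwa [Nat.card_zmod, Nat.card_eq_fintype_card (α := Sym _ n), Sym.card_sym_eq_multichoose,
    ZMod.card, Nat.multichoose_eq, show n + 1 + n - 1 = 2 * n by omega,
    ← Nat.centralBinom_eq_two_mul_choose] at this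

theorem ncard_isParking (n : ℕ) : {w : List ℕ | IsParking n w}.ncard = (n + 1) ^ (n - 1) := by
  have hset : {w : List ℕ | IsParking n w} =
      (fun g : Fin n → ZMod (n + 1) => List.ofFn fun i => (g i).val) ''
        {g | IsParking n (Finset.univ.val.map fun i => (g i).val)} := by
    ext w
    simp only [Set.mem_ofPred_eq, Set.mem_image, Fin.univ_val_map]
    refine ⟨fun hw => ?_, fun ⟨g, hg, hw⟩ => hw ▸ hg⟩
    obtain rfl : w.length = n := hw.1
    have hval (i : Fin w.length) : (w.get i : ZMod (w.length + 1)).val = w.get i :=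
      ZMod.val_cast_of_lt (Nat.lt_succ_of_lt (hw.lt (Multiset.mem_coe.2 (List.get_mem w i))))
    have hofFn : (List.ofFn fun i => (w.get i : ZMod (w.length + 1)).val) = w := by
      simp only [hval, List.ofFn_get]
    exact ⟨fun i => w.get i, by rwa [hofFn], hofFn⟩
  rw [hset, Set.ncard_image_of_injective _ fun g g' h =>
    funext fun i => ZMod.val_injective _ (congrFun (List.ofFn_injective h) i),
    ← Nat.card_coe_set_eq]
  refine Nat.eq_of_mul_eq_mul_right n.succ_pos ((card_isParking_fun_mul n).trans ?_)
  cases n <;> simp [pow_succ]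

theorem ncard_isParking_sorted (n : ℕ) :
    {w : List ℕ | IsParking n w ∧ w.Pairwise (· ≤ ·)}.ncard = catalan n := by
  have hset : {w : List ℕ | IsParking n w ∧ w.Pairwise (· ≤ ·)} =
      (fun q : Sym (ZMod (n + 1)) n => ((q : Multiset (ZMod (n + 1))).map ZMod.val).sort (· ≤ ·))
        '' {q | IsParking n ((q : Multiset (ZMod (n + 1))).map ZMod.val)} := by
    ext w
    simp only [Set.mem_ofPred_eq, Set.mem_image]
    constructor
    · rintro ⟨hw, hsorted⟩
      have hmap : (((w.map (↑) : List (ZMod (n + 1))) : Multiset (ZMod (n + 1)))).map ZMod.val =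
          w := by
        rw [Multiset.map_coe, List.map_map]
        exact congrArg _ ((List.map_congr_left fun v hv => ZMod.val_cast_of_lt
          (Nat.lt_succ_of_lt (hw.lt (Multiset.mem_coe.2 hv)))).trans (List.map_id w))
      refine ⟨⟨(w.map (↑) : List (ZMod (n + 1))), by simpa using hw.1⟩,
        by rwa [Sym.coe_mk, hmap], ?_⟩
      rw [Sym.coe_mk, hmap, Multiset.coe_sort, List.mergeSort_eq_self _ hsorted]
    · rintro ⟨q, hq, rfl⟩
      exact ⟨by rwa [Multiset.sort_eq], Multiset.pairwise_sort _ _⟩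
  rw [hset, Set.ncard_image_of_injective _ fun q q' h => ?_, ← Nat.card_coe_set_eq]
  · refine Nat.eq_of_mul_eq_mul_right n.succ_pos ((card_isParking_sym_mul n).trans ?_)
    rw [← succ_mul_catalan_eq_centralBinom, mul_comm]
  · have := congrArg ((↑) : List ℕ → Multiset ℕ) h
    simp only [Multiset.sort_eq] at this
    exact Sym.coe_injective (Multiset.map_injective (ZMod.val_injective _) this)

section Assortments

variable {n a b : ℕ} (ha : 0 < a) (hb : 0 < b) (hab : a ≤ b) (hdiv : a ∣ b ∨ n * a < b)
include ha hb hab hdiv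

theorem setOf_PAinv_eq_image :
    {x | PAinv (b :: List.replicate n a) x} =
      List.map (· * a + 1) '' {w | IsParking (n + 1) w} :=
  Set.ext fun _ => (PAinv_iff_exists_isParking ha hb hab hdiv).trans
    (exists_congr fun _ => and_congr_right fun _ => eq_comm)

theorem setOf_PAinv_sorted_eq_image :
    {x | PAinv (b :: List.replicate n a) x ∧ x.Pairwise (· ≤ ·)} =
      List.map (· * a + 1) '' {w | IsParking (n + 1) w ∧ w.Pairwise (· ≤ ·)} := by
  have hle {k k' : ℕ} : k * a + 1 ≤ k' * a + 1 ↔ k ≤ k' := by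
    simp [Nat.mul_le_mul_right_iff ha]
  ext x
  rw [Set.mem_ofPred_eq, PAinv_iff_exists_isParking ha hb hab hdiv]
  constructor
  · rintro ⟨⟨w, hw, rfl⟩, hsorted⟩
    exact ⟨w, ⟨hw, (List.pairwise_map.1 hsorted).imp hle.1⟩, rfl⟩
  · rintro ⟨w, ⟨hw, hsorted⟩, rfl⟩
    exact ⟨⟨w, hw, rfl⟩, List.pairwise_map.2 (hsorted.imp hle.2)⟩

end Assortments

/-- for `y = (b, a^{n−1})` with `a ∣ b` or `b > (n−1)a`,
`|PAinv_n(y)| = (n+1)^{n−1}` and `|PAinv↑_n(y)| = C_n = (1/(n+1))·binom(2n, n)`. -/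
theorem stmt5 (n a b : ℕ) (hn : 2 ≤ n) (ha : 0 < a) (hb : 0 < b)
    (y : List ℕ) (hy : y = b :: List.replicate (n - 1) a)
    (h : a ∣ b ∨ (n - 1) * a < b) :
    Set.ncard {x : List ℕ | PAinv y x} = (n + 1) ^ (n - 1) ∧
      Set.ncard {x : List ℕ | PAinv y x ∧ x.Pairwise (· ≤ ·)} =
        (2 * n).choose n / (n + 1) := by
  obtain ⟨n, rfl⟩ : ∃ m, n = m + 1 := ⟨n - 1, by omega⟩
  simp only [Nat.add_sub_cancel] at hy h ⊢
  subst hy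
  have hab : a ≤ b := h.elim (Nat.le_of_dvd hb) fun h => by
    have := Nat.mul_le_mul_right a (show 1 ≤ n by omega)
    omega
  have hinj : Function.Injective (List.map (· * a + 1)) :=
    List.map_injective_iff.2 fun k k' hkk' => by simpa [ha.ne'] using hkk'
  rw [setOf_PAinv_eq_image ha hb hab h, setOf_PAinv_sorted_eq_image ha hb hab h,
    Set.ncard_image_of_injective _ hinj, Set.ncard_image_of_injective _ hinj, ncard_isParking,
    ncard_isParking_sorted, catalan_eq_centralBinom_div, Nat.centralBinom_eq_two_mul_choose]
  simp
end

section
/- Let y = (b, a, a, ..., a) ∈ ℕ^n with n ≥ 2, and let x = (x_1,...,x_n) ∈ [m]^n where m = b + (n−1)a. If x ∈ PAinv_n(y), then the i-th smallest entry satisfies x_{(i)} ≤ 1 + (i−1)a for every i ∈ [n]. -/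
/-!
Suppose `x_{(i+1)} > c := 1 + i·a`. Reorder `x` so that its `n - i` largest entries are the
preferences of the cars of lengths `b, a, …, a` and its `i` smallest entries those of the last
`i` cars, of length `a`. The cars then fill `[1, m]` exactly, and each one parks at or beyond its
preference, so the spots `1, …, c` are covered by cars preferring a spot `≤ c`. These are among
the last `i` cars, whose total length `i·a` is less than `c`.
-/
lemma Park.exists_newly_occupied {m : ℕ} {occ : Finset ℕ} {l : List (ℕ × ℕ)}
    (h : Park m occ l) (hpref : ∀ p ∈ l, 1 ≤ p.1) :
    ∃ new : Finset ℕ, Disjoint occ new ∧ new ⊆ Finset.Icc 1 m ∧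
      new.card = (l.map Prod.snd).sum ∧
      ∀ c, (new.filter (· ≤ c)).card ≤
        ((l.filter (fun p => p.1 ≤ c)).map Prod.snd).sum := by
  induction h with
  | nil occ => exact ⟨∅, by simp⟩
  | cons occ pref len rest s hs _ ih =>
    obtain ⟨⟨hps, hsm, hfree⟩, -⟩ := hs
    obtain ⟨new, hdisj, hsub, hcard, hcount⟩ := ih fun p hp => hpref p (List.mem_cons_of_mem _ hp)
    have hpref1 : 1 ≤ pref := hpref _ List.mem_cons_self
    obtain ⟨hdisj_occ, hdisj_new⟩ := Finset.disjoint_union_left.1 hdisj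
    refine ⟨Finset.Ico s (s + len) ∪ new,
      Finset.disjoint_union_right.2 ⟨Finset.disjoint_right.2 hfree, hdisj_occ⟩,
      Finset.union_subset (fun t ht => ?_) hsub, ?_, fun c => ?_⟩
    · simp only [Finset.mem_Ico, Finset.mem_Icc] at ht ⊢
      omega
    · rw [Finset.card_union_of_disjoint hdisj_new, hcard]
      simp
    · rw [Finset.filter_union]
      refine (Finset.card_union_le _ _).trans ?_
      by_cases hc : pref ≤ c
      · have : ((Finset.Ico s (s + len)).filter (· ≤ c)).card ≤ len :=
          (Finset.card_filter_le _ _).trans (by simp)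
        simp only [List.filter_cons, hc, decide_true, if_true, List.map_cons, List.sum_cons]
        linarith [hcount c]
      · have : (Finset.Ico s (s + len)).filter (· ≤ c) = ∅ :=
          Finset.filter_eq_empty_iff.2 fun t ht => by simp only [Finset.mem_Ico] at ht; omega
        simpa [List.filter_cons, hc, this] using hcount c

lemma Park.le_sum_len_filter_pref_le {m : ℕ} {l : List (ℕ × ℕ)} (h : Park m ∅ l)
    (hpref : ∀ p ∈ l, 1 ≤ p.1) (hsum : (l.map Prod.snd).sum = m) {c : ℕ} (hc : c ≤ m) :
    c ≤ ((l.filter (fun p => p.1 ≤ c)).map Prod.snd).sum := by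
  obtain ⟨new, -, hsub, hcard, hcount⟩ := h.exists_newly_occupied hpref
  have hfull : new = Finset.Icc 1 m :=
    Finset.eq_of_subset_of_card_le hsub (by simp [hcard, hsum])
  have hinit : new.filter (· ≤ c) = Finset.Icc 1 c := by
    ext t
    simp only [hfull, Finset.mem_filter, Finset.mem_Icc]
    omega
  simpa [hinit] using hcount c

lemma PA.le_sum_len_filter_pref_le {y x : List ℕ} (h : PA y x) {c : ℕ} (hc : c ≤ y.sum) :
    c ≤ (((x.zip y).filter (fun p => p.1 ≤ c)).map Prod.snd).sum := by
  obtain ⟨hlen, hbound, hpark⟩ := h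
  refine hpark.le_sum_len_filter_pref_le (fun p hp => (hbound _ (List.of_mem_zip hp).1).1) ?_ hc
  rw [List.map_snd_zip hlen.ge]

lemma List.Pairwise.rel_getElem_of_mem_drop {α : Type*} {R : α → α → Prop} [Std.Refl R]
    {l : List α} (h : l.Pairwise R) {i : ℕ} (hi : i < l.length) {v : α} (hv : v ∈ l.drop i) :
    R l[i] v := by
  have hdrop : (l.drop i).Pairwise R := h.drop
  rw [List.drop_eq_getElem_cons hi] at hv hdrop
  rcases List.mem_cons.1 hv with rfl | hv
  · exact Std.Refl.refl _
  · exact List.rel_of_pairwise_cons hdrop hv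

lemma List.sum_map_snd_filter_zip_replicate_le {α : Type*} (l : List α) (p : α × ℕ → Bool)
    (k a : ℕ) : (((l.zip (List.replicate k a)).filter p).map Prod.snd).sum ≤ k * a := by
  refine (List.sum_le_card_nsmul _ a fun v hv => ?_).trans ?_
  · obtain ⟨q, hq, rfl⟩ := List.mem_map.1 hv
    exact (List.eq_of_mem_replicate (List.of_mem_zip (List.mem_filter.1 hq).1).2).le
  · rw [List.length_map, smul_eq_mul]
    refine Nat.mul_le_mul_right a ((List.length_filter_le _ _).trans ?_)
    simp

/-- `xs` is the nondecreasing rearrangement of `x`, indexed from `0`: `xs.getD i 0` is the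
paper's `x_{(i+1)}`. -/
theorem stmt8_general (n a b : ℕ)
    (y : List ℕ) (hy : y = b :: List.replicate (n - 1) a)
    (x : List ℕ)
    (xs : List ℕ) (hperm : xs.Perm x) (hsort : xs.Pairwise (· ≤ ·))
    (hx : PAinv y x) :
    ∀ i < n, xs.getD i 0 ≤ 1 + i * a := by
  intro i hi
  have hrot : xs.Perm (xs.drop i ++ xs.take i) := by
    simpa only [List.take_append_drop] using
      List.perm_append_comm (l₁ := xs.take i) (l₂ := xs.drop i)
  have hPA : PA y (xs.drop i ++ xs.take i) := hx _ (hperm.symm.trans hrot)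
  have hlen : xs.length = n := by
    have hlen_rot := hPA.1
    simp only [hy, List.length_append, List.length_drop, List.length_take, List.length_cons,
      List.length_replicate] at hlen_rot
    omega
  by_contra! hbig
  rw [List.getD_eq_getElem _ _ (by omega)] at hbig
  have hmem : xs[i] ∈ xs.drop i ++ xs.take i :=
    List.mem_append_left _ (List.mem_drop_iff_getElem.2 ⟨0, by omega, by simp⟩)
  have hc : 1 + i * a ≤ y.sum := hbig.le.trans (hPA.2.1 _ hmem).2
  have hsplit : y = b :: List.replicate (n - 1 - i) a ++ List.replicate i a := by
    rw [hy, List.cons_append, ← List.replicate_add, Nat.sub_add_cancel (by omega)]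
  have hlen_big : (xs.drop i).length = (b :: List.replicate (n - 1 - i) a).length := by
    simp only [List.length_drop, List.length_cons, List.length_replicate]
    omega
  have hcover := hPA.le_sum_len_filter_pref_le hc
  rw [hsplit, List.zip_append hlen_big, List.filter_append,
    List.filter_eq_nil_iff.2 fun p hp => ?_, List.nil_append] at hcover
  · have hsmall :=
      List.sum_map_snd_filter_zip_replicate_le (xs.take i) (fun p => p.1 ≤ 1 + i * a) i a
    omega
  · have hle := hsort.rel_getElem_of_mem_drop (by omega) (List.of_mem_zip hp).1
    simp only [decide_eq_true_eq]
    omega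

/-- for `y = (b, a^{n−1})`, if `x ∈ PAinv_n(y)` then the `i`-th smallest
entry of `x` is at most `1 + (i−1)a`. Here `xs` is the nondecreasing rearrangement
of `x`, indexed 0-based: `xs.getD i 0 ≤ 1 + i·a`. -/
theorem stmt8 (n a b : ℕ) (hn : 2 ≤ n) (ha : 0 < a) (hb : 0 < b)
    (y : List ℕ) (hy : y = b :: List.replicate (n - 1) a)
    (x : List ℕ) (hxlen : x.length = n)
    (hxm : ∀ v ∈ x, 1 ≤ v ∧ v ≤ b + (n - 1) * a)
    (xs : List ℕ) (hperm : xs.Perm x) (hsort : xs.Pairwise (· ≤ ·))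
    (hx : PAinv y x) :
    ∀ i < n, xs.getD i 0 ≤ 1 + i * a :=
  stmt8_general n a b y hy x xs hperm hsort hx
end
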